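/- arXiv:2209.14827 — 10 statements merged into one kernel-verified Lean document; each statement's English description precedes it below -/
import Mathlib

section
/- Let $F:\mathbb{R}^d\to\mathbb{R}$ be $\gamma$-quasar convex with minimizer $x^*$ and weakly $L$-smooth, with $F^* = F(x^*)$. Let $\eta, b_0 > 0$ and define iterates $x_{t+1} = x_t - \frac{\eta}{b_t}\nabla F(x_t)$ where $b_t = \sqrt{b_0^2 + \sum_{i=1}^t \|\nabla F(x_i)\|^2}$. Then $\sum_{t=1}^T \frac{F(x_t)-F^*}{b_t} \le \frac{\|x_1 - x^*\|^2}{\gamma\eta} + \frac{2\eta}{\gamma}\max\{\log\frac{2\eta L}{\gamma b_0}, 0\}$. -/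
/-!
Expanding the step gives
`‖x_{t+1} - x*‖² ≤ ‖x_t - x*‖² - 2 γ η Δ_t / b_t + η² ‖∇F(x_t)‖² / b_t²`
with `Δ_t = F(x_t) - F*`, by quasar convexity. The last term is absorbed by the potential
`2 η² log (min b_t B)` with `B = 2ηL/γ`: once `b_t ≥ B`, weak smoothness bounds it by half of the
descent term; while `b_t < B`, it is at most `η² (log b_t² - log b_{t-1}²)`. Telescoping, the
potential grows by at most `2 η² log⁺ (B / b₀)` in total.
-/

open RealInnerProductSpace Finset

lemma Real.sub_div_le_log_sub_log {u v : ℝ} (hu : 0 < u) (hv : 0 < v) :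
    (v - u) / v ≤ Real.log v - Real.log u := by
  have h := Real.one_sub_inv_le_log_of_pos (div_pos hv hu)
  rwa [inv_div, Real.log_div hv.ne' hu.ne', one_sub_div hv.ne'] at h

lemma Real.log_sub_log_min_eq_max {a B : ℝ} (ha : 0 < a) (hB : 0 < B) :
    Real.log B - Real.log (min a B) = max (Real.log (B / a)) 0 := by
  rcases le_total a B with h | h
  · rw [min_eq_left h, ← Real.log_div hB.ne' ha.ne',
      max_eq_left (Real.log_nonneg ((one_le_div ha).2 h))]
  · rw [min_eq_right h, sub_self,
      max_eq_right (Real.log_nonpos (div_nonneg hB.le ha.le) ((div_le_one ha).2 h))]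

lemma Finset.sum_Icc_one_le_sub_of_le {u v : ℕ → ℝ} (h : ∀ t, u (t + 1) ≤ v t - v (t + 1))
    (T : ℕ) : ∑ t ∈ Icc 1 T, u t ≤ v 0 - v T := by
  induction T with
  | zero => simp
  | succ n ih =>
    rw [sum_Icc_succ_top (by omega)]
    linarith [h n]

lemma norm_sub_smul_sub_sq_le {E : Type*} [NormedAddCommGroup E] [InnerProductSpace ℝ E]
    {x z v : E} {s c : ℝ} (hs : 0 ≤ s) (hc : c ≤ ⟪v, x - z⟫) :
    ‖x - s • v - z‖ ^ 2 ≤ ‖x - z‖ ^ 2 - 2 * s * c + s ^ 2 * ‖v‖ ^ 2 := by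
  have hsc : s * c ≤ s * ⟪v, x - z⟫ := mul_le_mul_of_nonneg_left hc hs
  rw [sub_right_comm, norm_sub_sq_real, real_inner_smul_right, real_inner_comm, norm_smul,
    mul_pow, Real.norm_eq_abs, sq_abs]
  linarith

noncomputable def adaGradNormScale (b₀ : ℝ) (g : ℕ → ℝ) (t : ℕ) : ℝ :=
  Real.sqrt (b₀ ^ 2 + ∑ i ∈ Icc 1 t, g i ^ 2)

section adaGradNormScale

variable {b₀ : ℝ} {g : ℕ → ℝ}

lemma adaGradNormScale_sq (b₀ : ℝ) (g : ℕ → ℝ) (t : ℕ) :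
    adaGradNormScale b₀ g t ^ 2 = b₀ ^ 2 + ∑ i ∈ Icc 1 t, g i ^ 2 :=
  Real.sq_sqrt (by positivity)

lemma adaGradNormScale_zero (hb₀ : 0 ≤ b₀) : adaGradNormScale b₀ g 0 = b₀ := by
  simp [adaGradNormScale, Real.sqrt_sq hb₀]

lemma adaGradNormScale_pos (hb₀ : 0 < b₀) (t : ℕ) : 0 < adaGradNormScale b₀ g t :=
  Real.sqrt_pos.2 (by positivity)

lemma adaGradNormScale_succ_sq (b₀ : ℝ) (g : ℕ → ℝ) (t : ℕ) :
    adaGradNormScale b₀ g (t + 1) ^ 2 = adaGradNormScale b₀ g t ^ 2 + g (t + 1) ^ 2 := by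
  rw [adaGradNormScale_sq, adaGradNormScale_sq, sum_Icc_succ_top (by omega), add_assoc]

end adaGradNormScale

/-- One step of the potential argument, with `a = b_{t-1}`, `c = b_t`, `G = ‖∇F(x_t)‖²`
and `Δ = F(x_t) - F*`. -/
lemma mul_div_sq_le_add_log_min_sub {a c G Δ B η γ L : ℝ} (ha : 0 < a) (hc : 0 < c)
    (hG : 0 ≤ G) (hca : c ^ 2 = a ^ 2 + G) (hGΔ : G ≤ 2 * L * Δ) (hΔ : 0 ≤ Δ)
    (hη : 0 ≤ η) (hγ : 0 ≤ γ) (hB : 0 < B) (hLB : 2 * η * L ≤ γ * B) :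
    η * G / c ^ 2 ≤ γ * (Δ / c) + 2 * η * (Real.log (min c B) - Real.log (min a B)) := by
  have hac : a ≤ c := (pow_le_pow_iff_left₀ ha.le hc.le two_ne_zero).1 (by linarith)
  rcases le_or_gt B c with hBc | hcB
  · have hlog : Real.log (min a B) ≤ Real.log (min c B) :=
      Real.log_le_log (lt_min ha hB) (min_le_min_right B hac)
    have hdesc : η * G ≤ γ * Δ * c := calc
      η * G ≤ η * (2 * L * Δ) := mul_le_mul_of_nonneg_left hGΔ hη
      _ = 2 * η * L * Δ := by ring
      _ ≤ γ * B * Δ := mul_le_mul_of_nonneg_right hLB hΔ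
      _ = γ * Δ * B := by ring
      _ ≤ γ * Δ * c := mul_le_mul_of_nonneg_left hBc (mul_nonneg hγ hΔ)
    calc η * G / c ^ 2 ≤ γ * Δ * c / c ^ 2 := by gcongr
      _ = γ * (Δ / c) := by field_simp
      _ ≤ _ := le_add_of_nonneg_right (mul_nonneg (by positivity) (sub_nonneg.2 hlog))
  · rw [min_eq_left hcB.le, min_eq_left (hac.trans hcB.le)]
    have hlog := Real.sub_div_le_log_sub_log (pow_pos ha 2) (pow_pos hc 2)
    rw [Real.log_pow, Real.log_pow, hca, add_sub_cancel_left, ← hca] at hlog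
    push_cast at hlog
    calc η * G / c ^ 2 = η * (G / c ^ 2) := mul_div_assoc _ _ _
      _ ≤ η * (2 * Real.log c - 2 * Real.log a) := by gcongr
      _ ≤ _ := by linarith [show 0 ≤ γ * (Δ / c) by positivity]

theorem sum_div_adaGradNormScale_le {Δ g r : ℕ → ℝ} {γ η L b₀ : ℝ} (hγ : 0 < γ) (hη : 0 < η)
    (hL : 0 < L) (hb₀ : 0 < b₀) (hgΔ : ∀ t, g t ^ 2 ≤ 2 * L * Δ t) (hr : ∀ t, 0 ≤ r t)
    (hdesc : ∀ t, r (t + 1) ≤ r t - 2 * (η / adaGradNormScale b₀ g t) * (γ * Δ t)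
      + (η / adaGradNormScale b₀ g t) ^ 2 * g t ^ 2) (T : ℕ) :
    ∑ t ∈ Icc 1 T, Δ t / adaGradNormScale b₀ g t
      ≤ r 1 / (γ * η) + 2 * η / γ * max (Real.log (2 * η * L / (γ * b₀))) 0 := by
  have hb := adaGradNormScale_pos (g := g) hb₀
  set b := adaGradNormScale b₀ g
  set B := 2 * η * L / γ
  have hB : 0 < B := by positivity
  have hΔ t : 0 ≤ Δ t := nonneg_of_mul_nonneg_right (by linarith [hgΔ t, sq_nonneg (g t)])
    (by positivity : (0 : ℝ) < 2 * L)
  set Φ : ℕ → ℝ := fun t => r (t + 1) - 2 * η ^ 2 * Real.log (min (b t) B)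
  have hstep t : γ * η * (Δ (t + 1) / b (t + 1)) ≤ Φ t - Φ (t + 1) := by
    have hpot := mul_div_sq_le_add_log_min_sub (hb t) (hb (t + 1)) (sq_nonneg _)
      (adaGradNormScale_succ_sq b₀ g t) (hgΔ (t + 1)) (hΔ (t + 1)) hη.le hγ.le hB
      (mul_div_cancel₀ _ hγ.ne').ge
    have hd : r (t + 2) ≤ r (t + 1) - 2 * η * (γ * (Δ (t + 1) / b (t + 1)))
        + η * (η * g (t + 1) ^ 2 / b (t + 1) ^ 2) := by
      convert hdesc (t + 1) using 2 <;> ring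
    linear_combination hd + η * hpot
  have hsum := sum_Icc_one_le_sub_of_le (u := fun t => γ * η * (Δ t / b t)) hstep T
  rw [← mul_sum] at hsum
  have hlogT : Real.log (min (b T) B) ≤ Real.log B :=
    Real.log_le_log (lt_min (hb T) hB) (min_le_right _ _)
  have hlog0 := Real.log_sub_log_min_eq_max hb₀ hB
  rw [div_div] at hlog0
  have hb0 : b 0 = b₀ := adaGradNormScale_zero hb₀.le
  simp only [Φ, hb0] at hsum
  set M := max (Real.log (2 * η * L / (γ * b₀))) 0
  have key : γ * η * ∑ t ∈ Icc 1 T, Δ t / b t ≤ r 1 + 2 * η ^ 2 * M := by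
    have := mul_le_mul_of_nonneg_left hlogT (sq_nonneg η)
    rw [← hlog0]
    linarith [hr (T + 1)]
  calc ∑ t ∈ Icc 1 T, Δ t / b t ≤ (r 1 + 2 * η ^ 2 * M) / (γ * η) :=
        (le_div_iff₀' (by positivity)).2 key
    _ = r 1 / (γ * η) + 2 * η / γ * M := by field_simp

theorem stmt_4_general {d : ℕ} (F : EuclideanSpace ℝ (Fin d) → ℝ)
    (xstar : EuclideanSpace ℝ (Fin d)) (γ L η b₀ : ℝ) (T : ℕ)
    (hγ : γ ∈ Set.Ioc (0 : ℝ) 1) (hL : 0 < L) (hη : 0 < η) (hb₀ : 0 < b₀)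
    (hquasar : ∀ y, F xstar ≥ F y + (1 / γ) * ⟪gradient F y, xstar - y⟫)
    (hweak : ∀ y, F y - F xstar ≥ ‖gradient F y‖ ^ 2 / (2 * L))
    (x : ℕ → EuclideanSpace ℝ (Fin d)) (b : ℕ → ℝ)
    (hb : ∀ t, b t = Real.sqrt (b₀ ^ 2 + ∑ i ∈ Finset.Icc 1 t, ‖gradient F (x i)‖ ^ 2))
    (hx : ∀ t, x (t + 1) = x t - (η / b t) • gradient F (x t)) :
    (∑ t ∈ Finset.Icc 1 T, (F (x t) - F xstar) / b t)
      ≤ ‖x 1 - xstar‖ ^ 2 / (γ * η)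
        + (2 * η / γ) * max (Real.log (2 * η * L / (γ * b₀))) 0 := by
  obtain ⟨hγ, -⟩ := hγ
  obtain rfl : b = adaGradNormScale b₀ (fun i => ‖gradient F (x i)‖) := funext hb
  have hsmooth y : ‖gradient F y‖ ^ 2 ≤ 2 * L * (F y - F xstar) := by
    have := hweak y
    rw [ge_iff_le, div_le_iff₀ (by positivity)] at this
    linarith
  have hinner y : γ * (F y - F xstar) ≤ ⟪gradient F y, y - xstar⟫ := by
    have := hquasar y
    rw [← neg_sub, inner_neg_right, ge_iff_le, ← le_sub_iff_add_le', one_div_mul_eq_div,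
      div_le_iff₀' hγ] at this
    linarith
  refine sum_div_adaGradNormScale_le (r := fun t => ‖x t - xstar‖ ^ 2) hγ hη hL hb₀
    (fun t => hsmooth (x t)) (fun t => sq_nonneg _) (fun t => ?_) T
  rw [hx]
  exact norm_sub_smul_sub_sq_le (div_nonneg hη.le (Real.sqrt_nonneg _)) (hinner _)

theorem stmt_4 {d : ℕ} (F : EuclideanSpace ℝ (Fin d) → ℝ)
    (xstar : EuclideanSpace ℝ (Fin d)) (γ L η b₀ : ℝ) (T : ℕ)
    (hγ : γ ∈ Set.Ioc (0 : ℝ) 1) (hL : 0 < L) (hη : 0 < η) (hb₀ : 0 < b₀)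
    (hdiff : Differentiable ℝ F)
    (hmin : ∀ y, F xstar ≤ F y)
    (hquasar : ∀ y, F xstar ≥ F y + (1 / γ) * ⟪gradient F y, xstar - y⟫)
    (hweak : ∀ y, F y - F xstar ≥ ‖gradient F y‖ ^ 2 / (2 * L))
    (x : ℕ → EuclideanSpace ℝ (Fin d)) (b : ℕ → ℝ)
    (hb : ∀ t, b t = Real.sqrt (b₀ ^ 2 + ∑ i ∈ Finset.Icc 1 t, ‖gradient F (x i)‖ ^ 2))
    (hx : ∀ t, x (t + 1) = x t - (η / b t) • gradient F (x t)) :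
    (∑ t ∈ Finset.Icc 1 T, (F (x t) - F xstar) / b t)
      ≤ ‖x 1 - xstar‖ ^ 2 / (γ * η)
        + (2 * η / γ) * max (Real.log (2 * η * L / (γ * b₀))) 0 :=
  stmt_4_general F xstar γ L η b₀ T hγ hL hη hb₀ hquasar hweak x b hb hx
end

section
/- Let $F:\mathbb{R}^d\to\mathbb{R}$ be $\gamma$-quasar convex with minimizer $x^*$ and weakly $L$-smooth. With the AdaGradNorm iterates $x_{t+1} = x_t - \frac{\eta}{b_t}\nabla F(x_t)$, $b_t = \sqrt{b_0^2 + \sum_{i=1}^t\|\nabla F(x_i)\|^2}$, one has $\frac{1}{T}\sum_{t=1}^T (F(x_t) - F^*) \le \frac{1}{T}\Big(\frac{2L\|x_1-x^*\|^2}{\gamma\eta} + \frac{4\eta L}{\gamma}\log^+\frac{2\eta L}{\gamma b_0} + b_0\Big)\Big(\frac{\|x_1-x^*\|^2}{\gamma\eta} + \frac{2\eta}{\gamma}\log^+\frac{2\eta L}{\gamma b_0}\Big)$. -/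
open RealInnerProductSpace Finset

private lemma tel_aux (f : ℕ → ℝ) (T : ℕ) :
    ∑ t ∈ Finset.Icc 1 T, (f t - f (t + 1)) = f 1 - f (T + 1) := by
  induction T with
  | zero => simp
  | succ n ih =>
    rw [Finset.sum_Icc_succ_top (Nat.le_add_left 1 n), ih]
    ring

private lemma tel_aux2 (m : ℕ → ℝ) (T : ℕ) :
    ∑ t ∈ Finset.Icc 1 T, (m t - m (t - 1)) = m T - m 0 := by
  have h := tel_aux (fun t => m (t - 1)) T
  simp only [Nat.add_sub_cancel] at h
  have h2 : ∑ t ∈ Finset.Icc 1 T, (m t - m (t - 1))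
      = - ∑ t ∈ Finset.Icc 1 T, (m (t - 1) - m t) := by
    rw [← Finset.sum_neg_distrib]
    exact Finset.sum_congr rfl (fun t _ => by ring)
  rw [h2, h]
  simp

set_option maxHeartbeats 1000000 in
theorem stmt_5 {d : ℕ} (F : EuclideanSpace ℝ (Fin d) → ℝ)
    (xstar : EuclideanSpace ℝ (Fin d)) (γ L η b₀ : ℝ) (T : ℕ) (hT : 1 ≤ T)
    (hγ : γ ∈ Set.Ioc (0 : ℝ) 1) (hL : 0 < L) (hη : 0 < η) (hb₀ : 0 < b₀)
    (hdiff : Differentiable ℝ F)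
    (hmin : ∀ y, F xstar ≤ F y)
    (hquasar : ∀ y, F xstar ≥ F y + (1 / γ) * ⟪gradient F y, xstar - y⟫)
    (hweak : ∀ y, F y - F xstar ≥ ‖gradient F y‖ ^ 2 / (2 * L))
    (x : ℕ → EuclideanSpace ℝ (Fin d)) (b : ℕ → ℝ)
    (hb : ∀ t, b t = Real.sqrt (b₀ ^ 2 + ∑ i ∈ Finset.Icc 1 t, ‖gradient F (x i)‖ ^ 2))
    (hx : ∀ t, x (t + 1) = x t - (η / b t) • gradient F (x t)) :
    (1 / (T : ℝ)) * ∑ t ∈ Finset.Icc 1 T, (F (x t) - F xstar)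
      ≤ (1 / (T : ℝ)) *
        ((2 * L * ‖x 1 - xstar‖ ^ 2 / (γ * η)
            + (4 * η * L / γ) * max (Real.log (2 * η * L / (γ * b₀))) 0 + b₀)
          * (‖x 1 - xstar‖ ^ 2 / (γ * η)
            + (2 * η / γ) * max (Real.log (2 * η * L / (γ * b₀))) 0)) := by
  obtain ⟨hγ0, hγ1⟩ := hγ
  set c : ℝ := 2 * η * L / γ with hcdef
  have hc0 : 0 < c := by positivity
  set M : ℝ := max (Real.log (2 * η * L / (γ * b₀))) 0 with hMdef
  have hM0 : 0 ≤ M := le_max_right _ _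
  have hMc : Real.log (c / b₀) ≤ M := by
    rw [hMdef, hcdef, div_div]
    exact le_max_left _ _
  set C : ℝ := max (c ^ 2) (b₀ ^ 2) with hCdef
  have hC0 : 0 < C := lt_max_of_lt_right (by positivity)
  -- basic facts about b
  have hsum0 : ∀ t, (0:ℝ) ≤ ∑ i ∈ Finset.Icc 1 t, ‖gradient F (x i)‖ ^ 2 :=
    fun t => Finset.sum_nonneg fun i _ => sq_nonneg _
  have hB : ∀ t, b t ^ 2 = b₀ ^ 2 + ∑ i ∈ Finset.Icc 1 t, ‖gradient F (x i)‖ ^ 2 := by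
    intro t; rw [hb t, Real.sq_sqrt (by nlinarith [hsum0 t])]
  have hbb : ∀ t, b₀ ≤ b t := by
    intro t
    rw [hb t]
    refine le_trans (le_of_eq (Real.sqrt_sq hb₀.le).symm) (Real.sqrt_le_sqrt ?_)
    nlinarith [hsum0 t]
  have hbpos : ∀ t, 0 < b t := fun t => lt_of_lt_of_le hb₀ (hbb t)
  have hbmono : ∀ s t : ℕ, s ≤ t → b s ≤ b t := by
    intro s t hst
    rw [hb s, hb t]
    apply Real.sqrt_le_sqrt
    apply add_le_add_right
    apply Finset.sum_le_sum_of_subset_of_nonneg (Finset.Icc_subset_Icc_right hst)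
    intro i _ _; exact sq_nonneg _
  have hΔ0 : ∀ t, 0 ≤ F (x t) - F xstar := fun t => sub_nonneg.2 (hmin _)
  have hgle : ∀ t, ‖gradient F (x t)‖ ^ 2 ≤ 2 * L * (F (x t) - F xstar) := by
    intro t
    have h := hweak (x t)
    rw [ge_iff_le, div_le_iff₀ (by positivity)] at h
    linarith
  have hq : ∀ t, γ * (F (x t) - F xstar) ≤ ⟪gradient F (x t), x t - xstar⟫ := by
    intro t
    have h := hquasar (x t)
    have h2 : ⟪gradient F (x t), xstar - x t⟫
        = - ⟪gradient F (x t), x t - xstar⟫ := by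
      rw [← inner_neg_right]
      congr 1
      abel
    rw [h2] at h
    have h3 : F (x t) - F xstar ≤ (1 / γ) * ⟪gradient F (x t), x t - xstar⟫ := by linarith
    have h4 := mul_le_mul_of_nonneg_left h3 hγ0.le
    calc γ * (F (x t) - F xstar)
        ≤ γ * ((1 / γ) * ⟪gradient F (x t), x t - xstar⟫) := h4
      _ = ⟪gradient F (x t), x t - xstar⟫ := by field_simp
  have hrec : ∀ t, ‖x (t + 1) - xstar‖ ^ 2
      = ‖x t - xstar‖ ^ 2 - 2 * (η / b t) * ⟪gradient F (x t), x t - xstar⟫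
        + (η / b t) ^ 2 * ‖gradient F (x t)‖ ^ 2 := by
    intro t
    rw [hx t, sub_right_comm, norm_sub_sq_real, real_inner_smul_right,
      real_inner_comm (x t - xstar), norm_smul, Real.norm_eq_abs, mul_pow, sq_abs]
    ring
  set m : ℕ → ℝ := fun t => Real.log (min (b t ^ 2) C) with hmdef
  have hminpos : ∀ t, 0 < min (b t ^ 2) C := by
    intro t
    have := hbpos t
    exact lt_min (by positivity) hC0
  -- the per-step key inequality
  have hkey : ∀ t ∈ Finset.Icc 1 T,
      2 * η * γ * ((F (x t) - F xstar) / b t)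
        ≤ (‖x t - xstar‖ ^ 2 - ‖x (t + 1) - xstar‖ ^ 2)
          + η ^ 2 * (m t - m (t - 1)) + η * γ * ((F (x t) - F xstar) / b t) := by
    intro t ht
    obtain ⟨ht1, _⟩ := Finset.mem_Icc.mp ht
    obtain ⟨s, rfl⟩ : ∃ s, t = s + 1 := ⟨t - 1, by omega⟩
    simp only [Nat.add_sub_cancel]
    have hbs1 := hbpos (s + 1)
    have hbs0 := hbpos s
    have hbne : b (s + 1) ≠ 0 := hbs1.ne'
    have hBstep : (b (s + 1)) ^ 2 = (b s) ^ 2 + ‖gradient F (x (s + 1))‖ ^ 2 := by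
      rw [hB (s + 1), hB s, Finset.sum_Icc_succ_top (Nat.le_add_left 1 s)]
      ring
    have hcore : ‖gradient F (x (s + 1))‖ ^ 2 / (b (s + 1)) ^ 2
        ≤ (m (s + 1) - m s) + (γ / η) * ((F (x (s + 1)) - F xstar) / (b (s + 1))) := by
      have hnn2 : 0 ≤ (γ / η) * ((F (x (s + 1)) - F xstar) / (b (s + 1))) :=
        mul_nonneg (by positivity) (div_nonneg (hΔ0 _) hbs1.le)
      rcases le_or_gt (b (s + 1)) c with hle | hlt
      · have hC1 : (b (s + 1)) ^ 2 ≤ C := le_max_of_le_left (by nlinarith)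
        have hC2 : (b s) ^ 2 ≤ C := by
          have := hbmono s (s + 1) (Nat.le_succ s)
          have := hbpos s
          nlinarith
        have hm1 : m (s + 1) = Real.log ((b (s + 1)) ^ 2) := by
          simp only [hmdef]; rw [min_eq_left hC1]
        have hm2 : m s = Real.log ((b s) ^ 2) := by
          simp only [hmdef]; rw [min_eq_left hC2]
        have hlog := Real.log_le_sub_one_of_pos
          (show (0:ℝ) < (b s) ^ 2 / (b (s + 1)) ^ 2 by positivity)
        rw [Real.log_div (by positivity) (by positivity)] at hlog
        have hfr : (b s) ^ 2 / (b (s + 1)) ^ 2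
            = 1 - ‖gradient F (x (s + 1))‖ ^ 2 / (b (s + 1)) ^ 2 := by
          rw [eq_sub_iff_add_eq, ← add_div, ← hBstep, div_self (by positivity)]
        rw [hm1, hm2]
        linarith [hlog, hnn2]
      · have hmm : m s ≤ m (s + 1) := by
          simp only [hmdef]
          apply Real.log_le_log (hminpos s)
          refine min_le_min ?_ le_rfl
          have := hbmono s (s + 1) (Nat.le_succ s)
          have := hbpos s
          nlinarith
        have step1 : ‖gradient F (x (s + 1))‖ ^ 2 / (b (s + 1)) ^ 2
            ≤ (γ / η) * ((F (x (s + 1)) - F xstar) / (b (s + 1))) := by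
          rw [div_le_iff₀ (by positivity)]
          have hg := hgle (s + 1)
          have hcb : c ≤ b (s + 1) := hlt.le
          have he : (γ / η) * ((F (x (s + 1)) - F xstar) / (b (s + 1))) * (b (s + 1)) ^ 2
              = (γ / η) * (F (x (s + 1)) - F xstar) * (b (s + 1)) := by
            field_simp
          rw [he]
          have hcc : 2 * L = (γ / η) * c := by
            rw [hcdef]; field_simp
          have hΔ := hΔ0 (s + 1)
          nlinarith [mul_le_mul_of_nonneg_left hcb
            (mul_nonneg (div_nonneg hγ0.le hη.le) hΔ)]
        linarith [hmm, step1]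
    -- combine
    have hrec1 := hrec (s + 1)
    have hq1 := hq (s + 1)
    have e1 : 2 * η * γ * ((F (x (s + 1)) - F xstar) / b (s + 1))
        = 2 * (η / b (s + 1)) * (γ * (F (x (s + 1)) - F xstar)) := by
      field_simp
    have e2 : (η / b (s + 1)) ^ 2 * ‖gradient F (x (s + 1))‖ ^ 2
        = η ^ 2 * (‖gradient F (x (s + 1))‖ ^ 2 / (b (s + 1)) ^ 2) := by
      field_simp
    have h5 := mul_le_mul_of_nonneg_left hq1
      (show (0:ℝ) ≤ 2 * (η / b (s + 1)) by positivity)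
    have h6 := mul_le_mul_of_nonneg_left hcore (sq_nonneg η)
    have e3 : η ^ 2 * ((m (s + 1) - m s)
          + (γ / η) * ((F (x (s + 1)) - F xstar) / b (s + 1)))
        = η ^ 2 * (m (s + 1) - m s)
          + η * γ * ((F (x (s + 1)) - F xstar) / b (s + 1)) := by
      field_simp
    linarith [hrec1]
  set X : ℝ := ∑ t ∈ Finset.Icc 1 T, ((F (x t) - F xstar) / b t) with hX
  have e1 : ∑ t ∈ Finset.Icc 1 T, (‖x t - xstar‖ ^ 2 - ‖x (t + 1) - xstar‖ ^ 2)
      = ‖x 1 - xstar‖ ^ 2 - ‖x (T + 1) - xstar‖ ^ 2 := tel_aux _ T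
  have e2 : ∑ t ∈ Finset.Icc 1 T, (m t - m (t - 1)) = m T - m 0 := tel_aux2 m T
  have hXsum : 2 * η * γ * X
      ≤ (‖x 1 - xstar‖ ^ 2 - ‖x (T + 1) - xstar‖ ^ 2) + η ^ 2 * (m T - m 0)
        + η * γ * X := by
    calc 2 * η * γ * X
        = ∑ t ∈ Finset.Icc 1 T, 2 * η * γ * ((F (x t) - F xstar) / b t) := by
          rw [hX, Finset.mul_sum]
      _ ≤ ∑ t ∈ Finset.Icc 1 T, ((‖x t - xstar‖ ^ 2 - ‖x (t + 1) - xstar‖ ^ 2)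
          + η ^ 2 * (m t - m (t - 1)) + η * γ * ((F (x t) - F xstar) / b t)) :=
          Finset.sum_le_sum hkey
      _ = (∑ t ∈ Finset.Icc 1 T, (‖x t - xstar‖ ^ 2 - ‖x (t + 1) - xstar‖ ^ 2))
          + (∑ t ∈ Finset.Icc 1 T, η ^ 2 * (m t - m (t - 1)))
          + (∑ t ∈ Finset.Icc 1 T, η * γ * ((F (x t) - F xstar) / b t)) := by
          rw [Finset.sum_add_distrib, Finset.sum_add_distrib]
      _ = (‖x 1 - xstar‖ ^ 2 - ‖x (T + 1) - xstar‖ ^ 2) + η ^ 2 * (m T - m 0)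
          + η * γ * X := by
          rw [e1, ← Finset.mul_sum, e2, ← Finset.mul_sum, hX]
  have hmT : m T - m 0 ≤ 2 * M := by
    have hm0 : m 0 = Real.log (b₀ ^ 2) := by
      simp only [hmdef]
      have hb0 : b 0 ^ 2 = b₀ ^ 2 := by rw [hB 0]; simp
      rw [hb0, min_eq_left (le_max_right _ _)]
    have hmT' : m T ≤ Real.log C :=
      Real.log_le_log (hminpos T) (min_le_right _ _)
    have hCM : Real.log C - Real.log (b₀ ^ 2) ≤ 2 * M := by
      rcases max_cases (c ^ 2) (b₀ ^ 2) with ⟨hCe, _⟩ | ⟨hCe, _⟩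
      · rw [hCdef, hCe]
        have hlg : Real.log (c ^ 2) - Real.log (b₀ ^ 2) = 2 * Real.log (c / b₀) := by
          rw [Real.log_div hc0.ne' hb₀.ne', Real.log_pow, Real.log_pow]
          push_cast; ring
        rw [hlg]
        linarith [hMc]
      · rw [hCdef, hCe]
        simp
        linarith [hM0]
    rw [hm0]
    linarith [hmT', hCM]
  set Q : ℝ := ‖x 1 - xstar‖ ^ 2 / (γ * η) + 2 * η / γ * M with hQdef
  have hQ0 : 0 ≤ Q := by
    rw [hQdef]
    have : (0:ℝ) ≤ 2 * η / γ * M := mul_nonneg (by positivity) hM0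
    positivity
  have hXle : X ≤ Q := by
    have h1 : η * γ * X ≤ ‖x 1 - xstar‖ ^ 2 + 2 * η ^ 2 * M := by
      nlinarith [hXsum, mul_le_mul_of_nonneg_left hmT (sq_nonneg η),
        sq_nonneg ‖x (T + 1) - xstar‖]
    refine le_of_mul_le_mul_left ?_ (mul_pos hη hγ0)
    calc η * γ * X ≤ ‖x 1 - xstar‖ ^ 2 + 2 * η ^ 2 * M := h1
      _ = η * γ * Q := by
          rw [hQdef]
          field_simp
  set S : ℝ := ∑ t ∈ Finset.Icc 1 T, (F (x t) - F xstar) with hS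
  have hSX : S ≤ b T * X := by
    rw [hS, hX, Finset.mul_sum]
    apply Finset.sum_le_sum
    intro t ht
    obtain ⟨h1, h2⟩ := Finset.mem_Icc.mp ht
    calc F (x t) - F xstar
        = ((F (x t) - F xstar) / b t) * b t := (div_mul_cancel₀ _ (hbpos t).ne').symm
      _ ≤ ((F (x t) - F xstar) / b t) * b T := by
          apply mul_le_mul_of_nonneg_left (hbmono t T h2)
          exact div_nonneg (hΔ0 t) (hbpos t).le
      _ = b T * ((F (x t) - F xstar) / b t) := mul_comm _ _
  have hbT : b T ≤ b₀ + 2 * L * Q := by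
    have h1 : b T ^ 2 ≤ b₀ ^ 2 + 2 * L * S := by
      rw [hB T, hS, Finset.mul_sum]
      have := Finset.sum_le_sum (fun i (_ : i ∈ Finset.Icc 1 T) => hgle i)
      linarith [this]
    have hSQ : S ≤ Q * b T := by
      calc S ≤ b T * X := hSX
        _ ≤ b T * Q := mul_le_mul_of_nonneg_left hXle (hbpos T).le
        _ = Q * b T := mul_comm _ _
    have h2 : b T ^ 2 ≤ b₀ ^ 2 + 2 * L * Q * b T := by nlinarith [hL]
    nlinarith [hbpos T, hbb T, hQ0, hL.le,
      mul_nonneg (sub_nonneg.2 (hbb T)) hb₀.le,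
      mul_nonneg (mul_nonneg hL.le hQ0) (sub_nonneg.2 (hbb T))]
  have hfin : S ≤ (b₀ + 2 * L * Q) * Q := by
    calc S ≤ b T * X := hSX
      _ ≤ b T * Q := mul_le_mul_of_nonneg_left hXle (hbpos T).le
      _ ≤ (b₀ + 2 * L * Q) * Q := mul_le_mul_of_nonneg_right hbT hQ0
  have hfac : 2 * L * ‖x 1 - xstar‖ ^ 2 / (γ * η) + 4 * η * L / γ * M + b₀
      = b₀ + 2 * L * Q := by
    rw [hQdef]
    field_simp
    ring
  rw [hfac]
  exact mul_le_mul_of_nonneg_left hfin (by positivity)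
end

section
/- Let $F:\mathbb{R}^d\to\mathbb{R}$ be $L$-smooth with $F^* = \inf F > -\infty$. Define $x_{t+1} = x_t - \frac{\eta}{b_t}\nabla F(x_t)$ with $b_t = \sqrt{b_0^2 + \sum_{i=1}^t\|\nabla F(x_i)\|^2}$, $\eta, b_0 > 0$. Then $b_T \le b_0 + \frac{2(F(x_1)-F^*)}{\eta} + 2\eta L \log^+\frac{\eta L}{b_0}$. -/
/-!
Write `s_t = η / b_t`. By `L`-smoothness each step decreases `F` by at least
`s_t (1 - L s_t / 2) ‖∇F(x_t)‖²`. Let `τ ≤ T` be the last index with `b_τ ≤ ηL` (or `τ = 0`).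
Up to `τ` the decrease telescopes, via `b_{t+1}² = b_t² + ‖∇F(x_{t+1})‖²`, into
`η (b_τ - b₀) - Lη² log (b_τ / b₀)`; after `τ` we have `L s_t ≤ 1`, so the decrease is at least
`(η / 2) (b_T - b_τ)`. Since `F` stays above `F*` and `b_τ ≤ max (ηL) b₀`, the bound follows.
-/

open RealInnerProductSpace Finset Real

theorem sub_le_sum_Ioc_of_succ_sub_le {u w : ℕ → ℝ} (h : ∀ t, u (t + 1) - u t ≤ w (t + 1))
    {a c : ℕ} (hac : a ≤ c) : u c - u a ≤ ∑ t ∈ Ioc a c, w t := by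
  induction c, hac using Nat.le_induction with
  | base => simp
  | succ n hn ih =>
    rw [sum_Ioc_succ_top hn]
    linarith [h n]

theorem sum_Ioc_le_sub_of_le_succ_sub {u w : ℕ → ℝ} (h : ∀ t, w (t + 1) ≤ u (t + 1) - u t)
    {a c : ℕ} (hac : a ≤ c) : ∑ t ∈ Ioc a c, w t ≤ u c - u a := by
  have := sub_le_sum_Ioc_of_succ_sub_le (u := -u) (w := -w)
    (fun t ↦ by simp only [Pi.neg_apply]; linarith [h t]) hac
  simp only [Pi.neg_apply, sum_neg_distrib] at this
  linarith

theorem sub_le_sq_sub_sq_div {p q : ℝ} (hp : 0 ≤ p) (hpq : p ≤ q) :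
    q - p ≤ (q ^ 2 - p ^ 2) / q := by
  rcases (hp.trans hpq).eq_or_lt with hq | hq
  · have : p = 0 := le_antisymm (hq ▸ hpq) hp
    simp [this, ← hq]
  · rw [le_div_iff₀ hq]
    nlinarith

theorem sq_sub_sq_div_sq_le_two_mul_log_sub {p q : ℝ} (hp : 0 < p) (hq : 0 < q) :
    (q ^ 2 - p ^ 2) / q ^ 2 ≤ 2 * (log q - log p) := by
  have h := one_sub_inv_le_log_of_pos (div_pos (pow_pos hq 2) (pow_pos hp 2))
  rw [inv_div, log_div (pow_pos hq 2).ne' (pow_pos hp 2).ne', log_pow, log_pow] at h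
  rw [sub_div, div_self (pow_pos hq 2).ne']
  push_cast at h
  linarith

theorem apply_sub_smul_le_of_quadratic_upper_bound {E : Type*} [NormedAddCommGroup E]
    [InnerProductSpace ℝ E] {F : E → ℝ} {L s : ℝ} {y v : E}
    (h : F (y - s • v) ≤ F y + ⟪v, y - s • v - y⟫ + L / 2 * ‖y - s • v - y‖ ^ 2) :
    F (y - s • v) ≤ F y - s * (1 - L * s / 2) * ‖v‖ ^ 2 := by
  rw [sub_sub_cancel_left, inner_neg_right, real_inner_smul_right, real_inner_self_eq_norm_sq,
    norm_neg, norm_smul, mul_pow, norm_eq_abs, sq_abs] at h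
  linarith

namespace AdaGradNorm

variable {b₀ : ℝ} {G b : ℕ → ℝ}

theorem b_zero (hb₀ : 0 ≤ b₀) (hb : ∀ t, b t = √(b₀ ^ 2 + ∑ i ∈ Icc 1 t, G i)) : b 0 = b₀ := by
  simp [hb, sqrt_sq hb₀]

section

variable (hG : ∀ t, 0 ≤ G t) (hb : ∀ t, b t = √(b₀ ^ 2 + ∑ i ∈ Icc 1 t, G i))
include hG hb

theorem b_succ_sq (t : ℕ) : b (t + 1) ^ 2 = b t ^ 2 + G (t + 1) := by
  have hnonneg (t : ℕ) : 0 ≤ b₀ ^ 2 + ∑ i ∈ Icc 1 t, G i :=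
    add_nonneg (sq_nonneg _) (sum_nonneg fun i _ ↦ hG i)
  rw [hb, hb, sq_sqrt (hnonneg _), sq_sqrt (hnonneg _), sum_Icc_succ_top (by omega)]
  ring

theorem G_succ_eq (t : ℕ) : G (t + 1) = b (t + 1) ^ 2 - b t ^ 2 := by
  linarith [b_succ_sq hG hb t]

theorem monotone_b : Monotone b := by
  refine monotone_nat_of_le_succ fun t ↦ ?_
  have h := b_succ_sq hG hb t
  have hpos : 0 ≤ b (t + 1) := by rw [hb]; exact sqrt_nonneg _
  nlinarith [hG (t + 1), sq_nonneg (b t), sq_nonneg (b (t + 1))]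

variable (hb₀ : 0 < b₀)
include hb₀

theorem le_b (t : ℕ) : b₀ ≤ b t :=
  b_zero hb₀.le hb ▸ monotone_b hG hb (Nat.zero_le t)

theorem b_pos (t : ℕ) : 0 < b t := hb₀.trans_le (le_b hG hb hb₀ t)

theorem sub_le_sum_div {a c : ℕ} (hac : a ≤ c) : b c - b a ≤ ∑ t ∈ Ioc a c, G t / b t := by
  refine sub_le_sum_Ioc_of_succ_sub_le (fun t ↦ ?_) hac
  rw [G_succ_eq hG hb t]
  exact sub_le_sq_sub_sq_div (b_pos hG hb hb₀ t).le (monotone_b hG hb (Nat.le_succ t))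

theorem sum_div_sq_le {a c : ℕ} (hac : a ≤ c) :
    ∑ t ∈ Ioc a c, G t / b t ^ 2 ≤ 2 * (log (b c) - log (b a)) := by
  rw [mul_sub]
  refine sum_Ioc_le_sub_of_le_succ_sub (u := fun t ↦ 2 * log (b t)) (fun t ↦ ?_) hac
  rw [G_succ_eq hG hb t, ← mul_sub]
  exact sq_sub_sq_div_sq_le_two_mul_log_sub (b_pos hG hb hb₀ t) (b_pos hG hb hb₀ (t + 1))

theorem sum_decrease_ge {L η : ℝ} (hL : 0 ≤ L) (hη : 0 ≤ η) {a c : ℕ} (hac : a ≤ c) :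
    η * (b c - b a) - L * η ^ 2 * (log (b c) - log (b a))
      ≤ ∑ t ∈ Ioc a c, η / b t * (1 - L * (η / b t) / 2) * G t := by
  have hsplit : ∑ t ∈ Ioc a c, η / b t * (1 - L * (η / b t) / 2) * G t
      = η * ∑ t ∈ Ioc a c, G t / b t - L * η ^ 2 / 2 * ∑ t ∈ Ioc a c, G t / b t ^ 2 := by
    rw [mul_sum, mul_sum, ← sum_sub_distrib]
    refine sum_congr rfl fun t _ ↦ ?_
    field_simp [(b_pos hG hb hb₀ t).ne']
  rw [hsplit]
  gcongr ?_ - ?_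
  · exact mul_le_mul_of_nonneg_left (sub_le_sum_div hG hb hb₀ hac) hη
  · linarith [mul_le_mul_of_nonneg_left (sum_div_sq_le hG hb hb₀ hac)
      (by positivity : 0 ≤ L * η ^ 2 / 2)]

theorem sum_decrease_ge_of_le_b {L η : ℝ} (hη : 0 ≤ η) {a c : ℕ} (hac : a ≤ c)
    (hlarge : ∀ t ∈ Ioc a c, η * L ≤ b t) :
    η / 2 * (b c - b a) ≤ ∑ t ∈ Ioc a c, η / b t * (1 - L * (η / b t) / 2) * G t := by
  calc η / 2 * (b c - b a) ≤ η / 2 * ∑ t ∈ Ioc a c, G t / b t :=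
        mul_le_mul_of_nonneg_left (sub_le_sum_div hG hb hb₀ hac) (by positivity)
    _ = ∑ t ∈ Ioc a c, η / b t * (1 / 2) * G t := by
        rw [mul_sum]
        exact sum_congr rfl fun t _ ↦ by ring
    _ ≤ _ := by
        refine sum_le_sum fun t ht ↦ ?_
        have hbt := b_pos hG hb hb₀ t
        have hLs : L * (η / b t) ≤ 1 := by
          rw [mul_div_assoc', div_le_one hbt, mul_comm]
          exact hlarge t ht
        gcongr
        · exact hG t
        · linarith

theorem le_of_decrease {f : ℕ → ℝ} {fstar L η : ℝ} (hL : 0 ≤ L) (hη : 0 < η)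
    (hdecrease : ∀ t, f (t + 1) ≤ f t - η / b t * (1 - L * (η / b t) / 2) * G t)
    (T : ℕ) (hf : fstar ≤ f (T + 1)) :
    b T ≤ b₀ + 2 * (f 1 - fstar) / η + 2 * η * L * max (log (η * L / b₀)) 0 := by
  set τ := Nat.findGreatest (fun t ↦ b t ≤ η * L) T with hτ
  obtain ⟨hτT, hbτ_le, hlarge⟩ := Nat.findGreatest_eq_iff.1 hτ.symm
  have hlog : log (b τ) - log b₀ ≤ max (log (η * L / b₀)) 0 := by
    rcases eq_or_ne τ 0 with h0 | h0
    · simp [h0, b_zero hb₀.le hb]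
    · have hbτ := b_pos hG hb hb₀ τ
      rw [log_div (hbτ.trans_le (hbτ_le h0)).ne' hb₀.ne']
      exact le_max_of_le_left (by gcongr; exact hbτ_le h0)
  have hf_sum {a c : ℕ} (hac : a ≤ c) : f (c + 1) - f (a + 1)
      ≤ -∑ t ∈ Ioc a c, η / b t * (1 - L * (η / b t) / 2) * G t := by
    rw [← sum_neg_distrib]
    exact sub_le_sum_Ioc_of_succ_sub_le (u := fun t ↦ f (t + 1))
      (fun t ↦ by linarith [hdecrease (t + 1)]) hac
  have hphase₁ := sum_decrease_ge hG hb hb₀ hL hη.le (Nat.zero_le τ)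
  have hphase₂ := sum_decrease_ge_of_le_b hG hb hb₀ hη.le hτT fun t ht ↦
    (not_le.1 (hlarge (mem_Ioc.1 ht).1 (mem_Ioc.1 ht).2)).le
  rw [b_zero hb₀.le hb] at hphase₁
  have hf₁ := hf_sum (Nat.zero_le τ)
  have hf₂ := hf_sum hτT
  have key : η * (b T + b τ - 2 * b₀ - 2 * η * L * (log (b τ) - log b₀)) ≤ 2 * (f 1 - fstar) := by
    linarith
  rw [mul_comm, ← le_div_iff₀ hη] at key
  calc b T ≤ b₀ + 2 * (f 1 - fstar) / η + 2 * η * L * (log (b τ) - log b₀) := by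
        linarith [le_b hG hb hb₀ τ]
    _ ≤ _ := by gcongr

end

end AdaGradNorm

theorem stmt_6_general {d : ℕ} (F : EuclideanSpace ℝ (Fin d) → ℝ)
    (Fstar L η b₀ : ℝ) (T : ℕ)
    (hL : 0 < L) (hη : 0 < η) (hb₀ : 0 < b₀)
    (hinf : IsGLB (Set.range F) Fstar)
    (hsmooth : ∀ x y, F x ≤ F y + ⟪gradient F y, x - y⟫ + L / 2 * ‖x - y‖ ^ 2)
    (x : ℕ → EuclideanSpace ℝ (Fin d)) (b : ℕ → ℝ)
    (hb : ∀ t, b t = Real.sqrt (b₀ ^ 2 + ∑ i ∈ Finset.Icc 1 t, ‖gradient F (x i)‖ ^ 2))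
    (hx : ∀ t, x (t + 1) = x t - (η / b t) • gradient F (x t)) :
    b T ≤ b₀ + 2 * (F (x 1) - Fstar) / η
      + 2 * η * L * max (Real.log (η * L / b₀)) 0 := by
  have hG (t : ℕ) : 0 ≤ ‖gradient F (x t)‖ ^ 2 := sq_nonneg _
  refine AdaGradNorm.le_of_decrease (f := fun t ↦ F (x t)) hG hb hb₀ hL.le hη (fun t ↦ ?_) T
    (hinf.1 (Set.mem_range_self _))
  rw [hx t]
  exact apply_sub_smul_le_of_quadratic_upper_bound (hsmooth _ _)

theorem stmt_6 {d : ℕ} (F : EuclideanSpace ℝ (Fin d) → ℝ)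
    (Fstar L η b₀ : ℝ) (T : ℕ)
    (hL : 0 < L) (hη : 0 < η) (hb₀ : 0 < b₀)
    (hdiff : Differentiable ℝ F)
    (hinf : IsGLB (Set.range F) Fstar)
    (hsmooth : ∀ x y, F x ≤ F y + ⟪gradient F y, x - y⟫ + L / 2 * ‖x - y‖ ^ 2)
    (x : ℕ → EuclideanSpace ℝ (Fin d)) (b : ℕ → ℝ)
    (hb : ∀ t, b t = Real.sqrt (b₀ ^ 2 + ∑ i ∈ Finset.Icc 1 t, ‖gradient F (x i)‖ ^ 2))
    (hx : ∀ t, x (t + 1) = x t - (η / b t) • gradient F (x t)) :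
    b T ≤ b₀ + 2 * (F (x 1) - Fstar) / η
      + 2 * η * L * max (Real.log (η * L / b₀)) 0 :=
  stmt_6_general F Fstar L η b₀ T hL hη hb₀ hinf hsmooth x b hb hx
end

section
/- Let $\xi_1,\dots,\xi_t$ be random vectors in $\mathbb{R}^d$ with $\mathbb{E}[\exp(\|\xi_s\|^2/\sigma^2)] \le e$ for all $s$, and let $M_t = \max_{s\in[t]}\|\xi_s\|^2$. Then for every real $p \ge 1/2$, $\mathbb{E}[M_t^p] \le \sigma^{2p}\big(\log^p(2p\,\Gamma(2p)\,e^2 t^2) + 1\big)$. -/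
open MeasureTheory Set Finset

lemma gamma_lb' {q : ℝ} (hq : 1 ≤ q) :
    q ^ q * Real.exp (-q) ≤ Real.Gamma (q + 1) := by
  have h0 : (0:ℝ) < q := lt_of_lt_of_le one_pos hq
  have hs : (0:ℝ) < q + 1 := by linarith
  have hGint : IntegrableOn (fun x : ℝ => Real.exp (-x) * x ^ q) (Ioi 0) := by
    have := Real.GammaIntegral_convergent hs
    simpa using this
  have hconst : IntegrableOn (fun x : ℝ => Real.exp (-x) * q ^ q) (Ioi q) := by
    have h := (exp_neg_integrableOn_Ioi q (zero_lt_one)).mul_const (q ^ q : ℝ)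
    simpa [IntegrableOn] using h
  have h1 : (∫ x in Ioi q, Real.exp (-x) * q ^ q) = q ^ q * Real.exp (-q) := by
    rw [MeasureTheory.integral_mul_const, integral_exp_neg_Ioi]
    ring
  have h2 : (∫ x in Ioi q, Real.exp (-x) * q ^ q) ≤ ∫ x in Ioi q, Real.exp (-x) * x ^ q := by
    refine setIntegral_mono_on hconst (hGint.mono_set (Ioi_subset_Ioi h0.le)) measurableSet_Ioi ?_
    intro x hx
    have hx' : q ≤ x := le_of_lt hx
    exact mul_le_mul_of_nonneg_left (Real.rpow_le_rpow h0.le hx' h0.le) (Real.exp_nonneg _)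
  have h3 : (∫ x in Ioi q, Real.exp (-x) * x ^ q) ≤ ∫ x in Ioi 0, Real.exp (-x) * x ^ q := by
    refine setIntegral_mono_set hGint ?_ (HasSubset.Subset.eventuallyLE (Ioi_subset_Ioi h0.le))
    filter_upwards [ae_restrict_mem measurableSet_Ioi] with x hx
    exact mul_nonneg (Real.exp_nonneg _) (Real.rpow_nonneg (le_of_lt hx) _)
  have h4 : Real.Gamma (q + 1) = ∫ x in Ioi 0, Real.exp (-x) * x ^ q := by
    rw [Real.Gamma_eq_integral hs]
    simp
  rw [h4]; linarith

lemma gamma_log_lb {q : ℝ} (hq : 1 ≤ q) :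
    q * (Real.log q - 1) ≤ Real.log (Real.Gamma (q + 1)) := by
  have h0 : (0:ℝ) < q := lt_of_lt_of_le one_pos hq
  have hpos : (0:ℝ) < q ^ q * Real.exp (-q) :=
    mul_pos (Real.rpow_pos_of_pos h0 _) (Real.exp_pos _)
  have := Real.log_le_log hpos (gamma_lb' hq)
  rw [Real.log_mul (ne_of_gt (Real.rpow_pos_of_pos h0 _)) (ne_of_gt (Real.exp_pos _)),
    Real.log_rpow h0, Real.log_exp] at this
  linarith


lemma pointwise_bound {p t : ℝ} (hp : (1:ℝ)/2 ≤ p) (ht : 1 ≤ t) {y : ℝ} (hy : 0 ≤ y) :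
    y ^ p ≤ (Real.log (2 * p * Real.Gamma (2 * p) * Real.exp 1 ^ 2 * t ^ 2)) ^ p
      + Real.exp y / (Real.exp 1 * t) := by
  have hp0 : (0:ℝ) < p := by linarith
  have hq : (1:ℝ) ≤ 2 * p := by linarith
  have hq0 : (0:ℝ) < 2 * p := by linarith
  have ht0 : (0:ℝ) < t := lt_of_lt_of_le one_pos ht
  have hGamma : 2 * p * Real.Gamma (2 * p) = Real.Gamma (2 * p + 1) :=
    (Real.Gamma_add_one (ne_of_gt hq0)).symm
  set L : ℝ := Real.log (2 * p * Real.Gamma (2 * p) * Real.exp 1 ^ 2 * t ^ 2) with hLdef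
  have hGpos : (0:ℝ) < Real.Gamma (2 * p + 1) := Real.Gamma_pos_of_pos (by linarith)
  have hL_eq : L = Real.log (Real.Gamma (2 * p + 1)) + 2 + 2 * Real.log t := by
    rw [hLdef, hGamma, Real.log_mul (by positivity) (by positivity),
      Real.log_mul (ne_of_gt hGpos) (by positivity), Real.log_pow, Real.log_pow, Real.log_exp]
    push_cast; ring
  have hG := gamma_log_lb hq
  have hlogq : 1 - (2*p)⁻¹ ≤ Real.log (2 * p) := by
    have h := Real.log_le_sub_one_of_pos (show (0:ℝ) < (2*p)⁻¹ by positivity)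
    rw [Real.log_inv] at h
    linarith
  have hql : -1 ≤ 2 * p * (Real.log (2 * p) - 1) := by
    have h2 : 2 * p * (1 - (2*p)⁻¹) ≤ 2 * p * Real.log (2*p) :=
      mul_le_mul_of_nonneg_left hlogq (le_of_lt hq0)
    have h3 : 2 * p * (2*p)⁻¹ = 1 := mul_inv_cancel₀ (ne_of_gt hq0)
    nlinarith
  have hlt : (0:ℝ) ≤ Real.log t := Real.log_nonneg ht
  have hL1 : 1 ≤ L := by rw [hL_eq]; linarith
  rcases le_or_gt y L with hcase | hcase
  · have : y ^ p ≤ L ^ p := Real.rpow_le_rpow hy hcase (le_of_lt hp0)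
    have hpos : (0:ℝ) ≤ Real.exp y / (Real.exp 1 * t) := by positivity
    linarith
  · have hy0 : (0:ℝ) < y := by linarith
    -- log(y/(2p)) ≤ y/(2p) - 1
    have hkey : Real.log (y / (2*p)) ≤ y / (2*p) - 1 :=
      Real.log_le_sub_one_of_pos (by positivity)
    have hlogdiv : Real.log (y / (2*p)) = Real.log y - Real.log (2*p) :=
      Real.log_div (ne_of_gt hy0) (ne_of_gt hq0)
    have hstep : p * Real.log y ≤ p * Real.log (2*p) + y/2 - p := by
      have h := mul_le_mul_of_nonneg_left hkey (le_of_lt hp0)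
      rw [hlogdiv] at h
      have : p * (y / (2*p)) = y / 2 := by field_simp
      nlinarith
    have hmain : Real.log y * p ≤ y - (1 + Real.log t) := by
      have hyL : y / 2 ≤ y - L / 2 := by linarith
      -- 2*(p log(2p) - p) ≤ log Γ(2p+1) = L - 2 - 2 log t
      have : 2 * p * (Real.log (2*p) - 1) ≤ L - 2 - 2 * Real.log t := by
        rw [hL_eq]; linarith
      nlinarith
    have h1 : y ^ p = Real.exp (Real.log y * p) := Real.rpow_def_of_pos hy0 p
    have h2 : Real.exp (Real.log y * p) ≤ Real.exp (y - (1 + Real.log t)) :=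
      Real.exp_le_exp.mpr hmain
    have h3 : Real.exp (y - (1 + Real.log t)) = Real.exp y / (Real.exp 1 * t) := by
      rw [Real.exp_sub, Real.exp_add, Real.exp_log ht0]
    have hLp : (0:ℝ) ≤ L ^ p := Real.rpow_nonneg (by linarith) _
    rw [h1]
    linarith [h2.trans_eq h3]

set_option maxHeartbeats 1000000 in
theorem stmt_8 {Ω : Type*} [MeasurableSpace Ω] (μ : Measure Ω) [IsProbabilityMeasure μ]
    {d t : ℕ} (ht : 1 ≤ t) (ξ : ℕ → Ω → EuclideanSpace ℝ (Fin d)) (σ p : ℝ)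
    (hσ : 0 < σ) (hp : (1 : ℝ) / 2 ≤ p)
    (hmeas : ∀ s, Measurable (ξ s))
    (hint : ∀ s, Integrable (fun ω => Real.exp (‖ξ s ω‖ ^ 2 / σ ^ 2)) μ)
    (hsub : ∀ s ∈ Finset.Icc 1 t, ∫ ω, Real.exp (‖ξ s ω‖ ^ 2 / σ ^ 2) ∂μ ≤ Real.exp 1)
    (M : Ω → ℝ)
    (hM : ∀ ω, M ω = (Finset.Icc 1 t).sup' (Finset.nonempty_Icc.2 ht) (fun s => ‖ξ s ω‖ ^ 2)) :
    (∫ ω, (M ω) ^ p ∂μ) ≤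
      σ ^ (2 * p) *
        ((Real.log (2 * p * Real.Gamma (2 * p) * Real.exp 1 ^ 2 * (t : ℝ) ^ 2)) ^ p + 1) := by
  have ht1 : (1:ℝ) ≤ (t:ℝ) := by exact_mod_cast ht
  have ht0 : (0:ℝ) < (t:ℝ) := lt_of_lt_of_le one_pos ht1
  have hσ2 : (0:ℝ) < σ ^ 2 := by positivity
  have hne : (Finset.Icc 1 t).Nonempty := Finset.nonempty_Icc.2 ht
  have hMnonneg : ∀ ω, 0 ≤ M ω := by
    intro ω
    rw [hM ω]
    exact le_trans (sq_nonneg ‖ξ 1 ω‖) (Finset.le_sup' (f := fun s => ‖ξ s ω‖ ^ 2) (Finset.mem_Icc.2 ⟨le_refl 1, ht⟩))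
  have hMmeas : Measurable M := by
    have hfun : M = (Finset.Icc 1 t).sup' hne (fun s ω => ‖ξ s ω‖ ^ 2) := by
      funext ω
      rw [hM ω, Finset.sup'_apply]
    rw [hfun]
    exact Finset.measurable_sup' hne (fun s _ => ((hmeas s).norm.pow_const 2))
  have hpt : ∀ ω, Real.exp (M ω / σ ^ 2)
      ≤ ∑ s ∈ Finset.Icc 1 t, Real.exp (‖ξ s ω‖ ^ 2 / σ ^ 2) := by
    intro ω
    obtain ⟨s0, hs0mem, hs0⟩ := Finset.exists_mem_eq_sup' hne (fun s => ‖ξ s ω‖ ^ 2)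
    have : M ω = ‖ξ s0 ω‖ ^ 2 := by rw [hM ω, hs0]
    rw [this]
    exact Finset.single_le_sum (f := fun s => Real.exp (‖ξ s ω‖ ^ 2 / σ ^ 2)) (fun s _ => Real.exp_nonneg _) hs0mem
  have hsumint : Integrable (fun ω => ∑ s ∈ Finset.Icc 1 t,
      Real.exp (‖ξ s ω‖ ^ 2 / σ ^ 2)) μ :=
    integrable_finset_sum _ (fun s _ => hint s)
  have hEint : Integrable (fun ω => Real.exp (M ω / σ ^ 2)) μ := by
    refine hsumint.mono' ((hMmeas.div_const _).exp.aestronglyMeasurable) ?_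
    filter_upwards with ω
    rw [Real.norm_eq_abs, Real.abs_exp]
    exact hpt ω
  have hEbound : (∫ ω, Real.exp (M ω / σ ^ 2) ∂μ) ≤ (t : ℝ) * Real.exp 1 := by
    calc (∫ ω, Real.exp (M ω / σ ^ 2) ∂μ)
        ≤ ∫ ω, ∑ s ∈ Finset.Icc 1 t, Real.exp (‖ξ s ω‖ ^ 2 / σ ^ 2) ∂μ :=
          integral_mono hEint hsumint hpt
      _ = ∑ s ∈ Finset.Icc 1 t, ∫ ω, Real.exp (‖ξ s ω‖ ^ 2 / σ ^ 2) ∂μ :=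
          integral_finset_sum _ (fun s _ => hint s)
      _ ≤ (Finset.Icc 1 t).card • Real.exp 1 := Finset.sum_le_card_nsmul _ _ _ hsub
      _ = (t : ℝ) * Real.exp 1 := by
          rw [Nat.card_Icc]
          simp [nsmul_eq_mul]
  set L : ℝ := Real.log (2 * p * Real.Gamma (2 * p) * Real.exp 1 ^ 2 * (t:ℝ) ^ 2) with hLdef
  have hsp : (0:ℝ) ≤ σ ^ (2 * p) := Real.rpow_nonneg hσ.le _
  have hsq : ((σ:ℝ) ^ 2 : ℝ) ^ p = σ ^ (2 * p) := by
    rw [← Real.rpow_natCast σ 2, ← Real.rpow_mul hσ.le]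
    norm_num
  have hbd : ∀ ω, (M ω) ^ p ≤ σ ^ (2 * p) * L ^ p
      + σ ^ (2 * p) / (Real.exp 1 * (t:ℝ)) * Real.exp (M ω / σ ^ 2) := by
    intro ω
    have hy : (0:ℝ) ≤ M ω / σ ^ 2 := div_nonneg (hMnonneg ω) hσ2.le
    have hMy : M ω = σ ^ 2 * (M ω / σ ^ 2) := by field_simp
    have h1 : (M ω) ^ p = σ ^ (2 * p) * (M ω / σ ^ 2) ^ p := by
      rw [hMy, Real.mul_rpow hσ2.le hy, hsq]
      rw [← hMy]
    have h2 := pointwise_bound hp ht1 hy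
    calc (M ω) ^ p = σ ^ (2 * p) * (M ω / σ ^ 2) ^ p := h1
      _ ≤ σ ^ (2 * p) * (L ^ p + Real.exp (M ω / σ ^ 2) / (Real.exp 1 * (t:ℝ))) :=
          mul_le_mul_of_nonneg_left h2 hsp
      _ = σ ^ (2 * p) * L ^ p
          + σ ^ (2 * p) / (Real.exp 1 * (t:ℝ)) * Real.exp (M ω / σ ^ 2) := by ring
  have hgint : Integrable (fun ω => σ ^ (2 * p) * L ^ p
      + σ ^ (2 * p) / (Real.exp 1 * (t:ℝ)) * Real.exp (M ω / σ ^ 2)) μ :=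
    (integrable_const _).add (hEint.const_mul _)
  calc (∫ ω, (M ω) ^ p ∂μ)
      ≤ ∫ ω, (σ ^ (2 * p) * L ^ p
          + σ ^ (2 * p) / (Real.exp 1 * (t:ℝ)) * Real.exp (M ω / σ ^ 2)) ∂μ := by
        refine integral_mono_of_nonneg ?_ hgint ?_
        · filter_upwards with ω; exact Real.rpow_nonneg (hMnonneg ω) p
        · filter_upwards with ω; exact hbd ω
    _ = σ ^ (2 * p) * L ^ p
        + σ ^ (2 * p) / (Real.exp 1 * (t:ℝ)) * ∫ ω, Real.exp (M ω / σ ^ 2) ∂μ := by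
        rw [integral_add (integrable_const _) (hEint.const_mul _), integral_const,
          integral_const_mul]
        simp
    _ ≤ σ ^ (2 * p) * L ^ p
        + σ ^ (2 * p) / (Real.exp 1 * (t:ℝ)) * ((t : ℝ) * Real.exp 1) := by
        gcongr
    _ = σ ^ (2 * p) * (L ^ p + 1) := by
        field_simp
end

section
/- Fix $p \in (0, 1/2)$ and define $e(p) = \exp(1)$ if $p < \frac{3-\sqrt5}{2}$, and $e(p) = \exp\big(\frac{p^2 + \sqrt{p(p-1)(p^2-3p+1)}}{p(1-2p)}\big)$ if $\frac{3-\sqrt5}{2} \le p < \frac12$. Then the function $r(x) = x^{\frac{1}{2(1-p)}} (\log x)^{\frac{p}{1-p}}$ is concave on $[e(p)^{2p}, \infty)$. -/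
/-!
With `L = log x`, the second derivative of `x ^ a * L ^ b` is
`x ^ (a - 2) * L ^ (b - 2) * (a (a - 1) L² + (2a - 1) b L + b (b - 1))`, so on a half-line
`[c, ∞)` with `c > 1` concavity reduces to the sign of a quadratic in `L` for `L > log c`.
For `a = 1 / (2(1 - p))`, `b = p / (1 - p)` this quadratic is, up to the factor `4 (1 - p)²`,
`(2p - 1) L² + 4p² L + 4p (2p - 1)`, which opens downwards and has reduced discriminant
`4 p (p - 1) (p² - 3p + 1)`. For `p < (3 - √5) / 2` the discriminant is negative, so the
quadratic is negative everywhere; otherwise its larger root is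
`2 (p² + √(p (p - 1) (p² - 3p + 1))) / (1 - 2p)`, which is exactly `log (e(p) ^ (2p))`.
-/

open Real Set

namespace Real

variable {a b x : ℝ}

theorem hasDerivAt_rpow_mul_log_rpow (hx : 1 < x) :
    HasDerivAt (fun y => y ^ a * log y ^ b)
      (a * (x ^ (a - 1) * log x ^ b) + b * (x ^ (a - 1) * log x ^ (b - 1))) x := by
  have hx0 : x ≠ 0 := by positivity
  have hpow : HasDerivAt (fun y => y ^ a) (a * x ^ (a - 1)) x :=
    hasDerivAt_rpow_const (Or.inl hx0)
  have hlog : HasDerivAt (fun y => log y ^ b) (b * log x ^ (b - 1) * x⁻¹) x :=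
    (hasDerivAt_rpow_const (Or.inl (log_pos hx).ne')).comp x (hasDerivAt_log hx0)
  refine (hpow.mul hlog).congr_deriv ?_
  rw [rpow_sub_one hx0 a]
  ring

theorem hasDerivAt_deriv_rpow_mul_log_rpow (hx : 1 < x) :
    HasDerivAt (fun y => a * (y ^ (a - 1) * log y ^ b) + b * (y ^ (a - 1) * log y ^ (b - 1)))
      (x ^ (a - 2) * log x ^ (b - 2) *
        (a * (a - 1) * log x ^ 2 + (2 * a - 1) * b * log x + b * (b - 1))) x := by
  have hL : 0 < log x := log_pos hx
  refine (((hasDerivAt_rpow_mul_log_rpow (a := a - 1) (b := b) hx).const_mul a).add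
    ((hasDerivAt_rpow_mul_log_rpow (a := a - 1) (b := b - 1) hx).const_mul b)).congr_deriv ?_
  have hb : log x ^ b = log x ^ (b - 2) * log x ^ 2 := by
    rw [← rpow_natCast, ← rpow_add hL]; norm_num
  have hb1 : log x ^ (b - 1) = log x ^ (b - 2) * log x := by
    rw [← rpow_add_one hL.ne']; ring_nf
  rw [show a - 1 - 1 = a - 2 by ring, show b - 1 - 1 = b - 2 by ring, hb, hb1]
  ring

theorem concaveOn_rpow_mul_log_rpow {c : ℝ} (hc : 1 < c)
    (hq : ∀ L, log c < L → a * (a - 1) * L ^ 2 + (2 * a - 1) * b * L + b * (b - 1) ≤ 0) :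
    ConcaveOn ℝ (Ici c) (fun x => x ^ a * log x ^ b) := by
  have hint : ∀ x ∈ interior (Ici c), c < x := by simp
  refine concaveOn_of_hasDerivWithinAt2_nonpos (convex_Ici c)
    (fun x hx => (hasDerivAt_rpow_mul_log_rpow (hc.trans_le hx)).continuousAt.continuousWithinAt)
    (fun x hx => (hasDerivAt_rpow_mul_log_rpow (hc.trans (hint x hx))).hasDerivWithinAt)
    (fun x hx => (hasDerivAt_deriv_rpow_mul_log_rpow (hc.trans (hint x hx))).hasDerivWithinAt)
    fun x hx => ?_
  have hx1 : 1 < x := hc.trans (hint x hx)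
  exact mul_nonpos_of_nonneg_of_nonpos
    (mul_nonneg (rpow_nonneg (by linarith) _) (rpow_nonneg (log_nonneg hx1.le) _))
    (hq _ (log_lt_log (by linarith) (hint x hx)))

end Real

section Quadratic

variable {p : ℝ}

theorem quadratic_neg_of_lt_three_sub_sqrt_five_div_two (hp0 : 0 < p)
    (hp : p < (3 - √5) / 2) (L : ℝ) :
    (2 * p - 1) * L ^ 2 + 4 * p ^ 2 * L + 4 * p * (2 * p - 1) < 0 := by
  have h5 : √5 ^ 2 = 5 := sq_sqrt (by norm_num)
  have h5lt : 2 < √5 := by nlinarith [sqrt_nonneg 5]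
  have hroot : 0 < p ^ 2 - 3 * p + 1 := by
    nlinarith [mul_pos (sub_pos.2 hp) (by linarith [sqrt_nonneg 5] : 0 < (3 + √5) / 2 - p)]
  have hp1 : 0 < 1 - 2 * p := by linarith
  -- `(2p - 1)` times the quadratic is `((1 - 2p) L - 2p²)² - 4 p (p - 1) (p² - 3p + 1)`
  nlinarith [sq_nonneg ((1 - 2 * p) * L - 2 * p ^ 2), mul_pos (mul_pos hp0 hroot) hp1]

theorem quadratic_nonpos_of_three_sub_sqrt_five_div_two_le (hp0 : 0 < p) (hp : p < 1 / 2)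
    (hp5 : (3 - √5) / 2 ≤ p) {L : ℝ}
    (hL : 2 * p * ((p ^ 2 + √(p * (p - 1) * (p ^ 2 - 3 * p + 1))) / (p * (1 - 2 * p))) ≤ L) :
    (2 * p - 1) * L ^ 2 + 4 * p ^ 2 * L + 4 * p * (2 * p - 1) ≤ 0 := by
  set s := √(p * (p - 1) * (p ^ 2 - 3 * p + 1))
  have h5 : √5 ^ 2 = 5 := sq_sqrt (by norm_num)
  have hroot : p ^ 2 - 3 * p + 1 ≤ 0 := by nlinarith [sqrt_nonneg 5]
  have hs : s ^ 2 = p * (p - 1) * (p ^ 2 - 3 * p + 1) :=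
    sq_sqrt (mul_nonneg_of_nonpos_of_nonpos (by nlinarith) hroot)
  have hp1 : 0 < 1 - 2 * p := by linarith
  have hL' : 2 * (p ^ 2 + s) ≤ (1 - 2 * p) * L := by
    rw [mul_div_assoc', div_le_iff₀ (by positivity)] at hL
    nlinarith
  have hs0 : 0 ≤ s := sqrt_nonneg _
  have hfactor : 0 ≤ (1 - 2 * p) * L - 2 * p ^ 2 + 2 * s := by linarith
  -- `(2p - 1)` times the quadratic is `((1 - 2p) L - 2p² - 2s) ((1 - 2p) L - 2p² + 2s)`
  nlinarith [mul_nonneg (sub_nonneg.2 hL') hfactor]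

end Quadratic

theorem stmt_9 (p : ℝ) (hp0 : 0 < p) (hp : p < 1 / 2)
    (ep : ℝ)
    (hep : ep = if p < (3 - Real.sqrt 5) / 2 then Real.exp 1
      else Real.exp ((p ^ 2 + Real.sqrt (p * (p - 1) * (p ^ 2 - 3 * p + 1))) / (p * (1 - 2 * p)))) :
    ConcaveOn ℝ (Set.Ici (ep ^ (2 * p)))
      (fun x => x ^ (1 / (2 * (1 - p))) * (Real.log x) ^ (p / (1 - p))) := by
  have hp1 : 0 < 1 - 2 * p := by linarith
  have hexp : ∃ t, 0 < t ∧ ep = exp t := by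
    rw [hep]
    split_ifs
    · exact ⟨1, one_pos, rfl⟩
    · exact ⟨_, div_pos (by positivity) (by positivity), rfl⟩
  obtain ⟨t, ht, rfl⟩ := hexp
  refine concaveOn_rpow_mul_log_rpow (one_lt_rpow (one_lt_exp_iff.2 ht) (by positivity))
    fun L hL => ?_
  rw [log_rpow (exp_pos t), log_exp] at hL
  have hq : (2 * p - 1) * L ^ 2 + 4 * p ^ 2 * L + 4 * p * (2 * p - 1) ≤ 0 := by
    split_ifs at hep with h
    · exact (quadratic_neg_of_lt_three_sub_sqrt_five_div_two hp0 h L).le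
    · rw [exp_eq_exp.1 hep] at hL
      exact quadratic_nonpos_of_three_sub_sqrt_five_div_two_le hp0 hp (not_lt.1 h) hL.le
  have h1p : 1 - p ≠ 0 := by linarith
  calc _ = ((2 * p - 1) * L ^ 2 + 4 * p ^ 2 * L + 4 * p * (2 * p - 1)) / (4 * (1 - p) ^ 2) := by
        field_simp; ring
    _ ≤ 0 := div_nonpos_of_nonpos_of_nonneg hq (by positivity)
end

section
/- Let $0 < b_0 \le b_1 \le \cdots \le b_T$ and $0 < \delta < 1$ be reals, and set $c_t = b_t^{\delta} b_{t-1}^{1-\delta}$. Then $\sum_{t=1}^T \frac{b_t^2 - b_{t-1}^2}{c_t^2} = \sum_{t=1}^T \Big[\big(\frac{b_t}{b_{t-1}}\big)^{2-2\delta} - \big(\frac{b_{t-1}}{b_t}\big)^{2\delta}\Big] \ge 2(1-\delta)\log\frac{b_T}{b_0}$. -/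
open Finset Real

lemma key_eq (x y δ : ℝ) (hx : 0 < x) (hy : 0 < y) :
    (x ^ 2 - y ^ 2) / (x ^ δ * y ^ (1 - δ)) ^ 2
      = (x / y) ^ (2 - 2 * δ) - (y / x) ^ (2 * δ) := by
  have hden : (x ^ δ * y ^ (1 - δ)) ^ 2 = x ^ (2 * δ) * y ^ (2 - 2 * δ) := by
    rw [mul_pow, ← Real.rpow_natCast (x ^ δ) 2, ← Real.rpow_natCast (y ^ (1 - δ)) 2,
      ← Real.rpow_mul hx.le, ← Real.rpow_mul hy.le]
    norm_num
    ring_nf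
  rw [hden, Real.div_rpow hx.le hy.le, Real.div_rpow hy.le hx.le]
  have h1 : x ^ (2 - 2 * δ) * x ^ (2 * δ) = x ^ 2 := by
    rw [← Real.rpow_add hx, ← Real.rpow_two]; norm_num
  have h2 : y ^ (2 * δ) * y ^ (2 - 2 * δ) = y ^ 2 := by
    rw [← Real.rpow_add hy, ← Real.rpow_two]; norm_num
  have hx1 : (0:ℝ) < x ^ (2 * δ) := Real.rpow_pos_of_pos hx _
  have hx2 : (0:ℝ) < x ^ (2 - 2 * δ) := Real.rpow_pos_of_pos hx _
  have hy1 : (0:ℝ) < y ^ (2 * δ) := Real.rpow_pos_of_pos hy _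
  have hy2 : (0:ℝ) < y ^ (2 - 2 * δ) := Real.rpow_pos_of_pos hy _
  field_simp
  rw [← h1, ← h2]
  ring

lemma key_ineq (x y δ : ℝ) (hδ0 : 0 < δ) (hδ1 : δ < 1) (hy : 0 < y) (hxy : y ≤ x) :
    (x / y) ^ (2 - 2 * δ) - (y / x) ^ (2 * δ)
      ≥ (2 - 2 * δ) * (Real.log x - Real.log y) := by
  have hx : 0 < x := hy.trans_le hxy
  have hz1 : (1:ℝ) ≤ x / y := (one_le_div hy).2 hxy
  have hz0 : (0:ℝ) < x / y := lt_of_lt_of_le one_pos hz1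
  have hyx : y / x ≤ 1 := (div_le_one hx).2 hxy
  have h2 : (y / x) ^ (2 * δ) ≤ 1 :=
    Real.rpow_le_one (div_nonneg hy.le hx.le) hyx (by linarith)
  have h1 : (2 - 2 * δ) * Real.log (x / y) + 1 ≤ (x / y) ^ (2 - 2 * δ) := by
    rw [Real.rpow_def_of_pos hz0, mul_comm (Real.log (x/y))]
    exact Real.add_one_le_exp _
  rw [Real.log_div hx.ne' hy.ne'] at h1
  linarith

lemma telescope (f : ℕ → ℝ) (T : ℕ) :
    ∑ t ∈ Finset.Icc 1 T, (f t - f (t - 1)) = f T - f 0 := by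
  induction T with
  | zero => simp
  | succ n ih =>
      rw [Finset.sum_Icc_succ_top (Nat.le_add_left 1 n), ih]
      simp

theorem stmt_10 (T : ℕ) (b : ℕ → ℝ) (δ : ℝ) (hδ0 : 0 < δ) (hδ1 : δ < 1)
    (hpos : ∀ t, 0 < b t) (hmono : Monotone b) (c : ℕ → ℝ)
    (hc : ∀ t, c t = b t ^ δ * b (t - 1) ^ (1 - δ)) :
    (∑ t ∈ Finset.Icc 1 T, ((b t) ^ 2 - (b (t - 1)) ^ 2) / (c t) ^ 2)
      = (∑ t ∈ Finset.Icc 1 T,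
          ((b t / b (t - 1)) ^ (2 - 2 * δ) - (b (t - 1) / b t) ^ (2 * δ))) ∧
    (∑ t ∈ Finset.Icc 1 T, ((b t) ^ 2 - (b (t - 1)) ^ 2) / (c t) ^ 2)
      ≥ 2 * (1 - δ) * Real.log (b T / b 0) := by
  have heq : (∑ t ∈ Finset.Icc 1 T, ((b t) ^ 2 - (b (t - 1)) ^ 2) / (c t) ^ 2)
      = (∑ t ∈ Finset.Icc 1 T,
          ((b t / b (t - 1)) ^ (2 - 2 * δ) - (b (t - 1) / b t) ^ (2 * δ))) := by
    refine Finset.sum_congr rfl fun t _ => ?_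
    rw [hc t]
    exact key_eq _ _ _ (hpos t) (hpos (t - 1))
  refine ⟨heq, ?_⟩
  rw [heq, ge_iff_le]
  calc 2 * (1 - δ) * Real.log (b T / b 0)
      = ∑ t ∈ Finset.Icc 1 T,
          ((2 - 2 * δ) * Real.log (b t) - (2 - 2 * δ) * Real.log (b (t - 1))) := by
        rw [telescope (fun t => (2 - 2 * δ) * Real.log (b t)) T,
          Real.log_div (hpos T).ne' (hpos 0).ne']
        ring
    _ ≤ _ := by
        refine Finset.sum_le_sum fun t ht => ?_
        have hle : b (t - 1) ≤ b t := hmono (Nat.sub_le t 1)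
        have := key_ineq (b t) (b (t - 1)) δ hδ0 hδ1 (hpos (t - 1)) hle
        linarith
end

section
/- Let $g_t = \|\nabla F(x_t)\|^2$ for $t \ge 1$ with $g_t \le g_{t-1}$ for all $t$ in some range $t \ge s+2$ (with $s \ge 0$), and set $b_t^2 = b_0^2 + \sum_{i=1}^t i\, g_i$ with $b_0 > 0$. Then for all $t \ge \max\{s+2, 2\}$, $\frac{t\, g_t}{b_t^2} \le \frac{t}{2t-1} \le \frac{2}{3}$. -/
open Finset

theorem stmt_14 (g : ℕ → ℝ) (b₀ : ℝ) (s : ℕ) (hb₀ : 0 < b₀)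
    (hg : ∀ t, 0 ≤ g t)
    (hmono : ∀ t, s + 2 ≤ t → g t ≤ g (t - 1)) :
    ∀ t, s + 2 ≤ t → 2 ≤ t →
      ((t : ℝ) * g t) / (b₀ ^ 2 + ∑ i ∈ Finset.Icc 1 t, (i : ℝ) * g i)
          ≤ (t : ℝ) / (2 * t - 1) ∧
      (t : ℝ) / (2 * t - 1) ≤ 2 / 3 := by
  intro t hst ht2
  have ht2R : (2 : ℝ) ≤ (t : ℝ) := by exact_mod_cast ht2
  have h2t : (0 : ℝ) < 2 * t - 1 := by linarith
  have hsub : ({t - 1, t} : Finset ℕ) ⊆ Finset.Icc 1 t := by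
    intro x hx
    simp only [Finset.mem_insert, Finset.mem_singleton] at hx
    rcases hx with rfl | rfl <;> simp [Finset.mem_Icc] <;> omega
  have hne : t - 1 ≠ t := by omega
  have hpair : ((t - 1 : ℕ) : ℝ) * g (t - 1) + (t : ℝ) * g t
      ≤ ∑ i ∈ Finset.Icc 1 t, (i : ℝ) * g i := by
    have := Finset.sum_le_sum_of_subset_of_nonneg hsub
      (fun i _ _ => mul_nonneg (Nat.cast_nonneg i) (hg i))
    rwa [Finset.sum_pair hne] at this
  have hcast : ((t - 1 : ℕ) : ℝ) = (t : ℝ) - 1 := by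
    have : 1 ≤ t := by omega
    push_cast [this]; ring
  have hmt : g t ≤ g (t - 1) := hmono t hst
  have hkey : (2 * (t : ℝ) - 1) * g t ≤ ∑ i ∈ Finset.Icc 1 t, (i : ℝ) * g i := by
    have h1 : ((t : ℝ) - 1) * g t ≤ ((t : ℝ) - 1) * g (t - 1) := by
      apply mul_le_mul_of_nonneg_left hmt; linarith
    rw [hcast] at hpair; nlinarith
  have hS : 0 ≤ ∑ i ∈ Finset.Icc 1 t, (i : ℝ) * g i :=
    Finset.sum_nonneg fun i _ => mul_nonneg (Nat.cast_nonneg i) (hg i)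
  have hD : (0 : ℝ) < b₀ ^ 2 + ∑ i ∈ Finset.Icc 1 t, (i : ℝ) * g i := by positivity
  constructor
  · rw [div_le_div_iff₀ hD h2t]
    nlinarith [hg t, mul_le_mul_of_nonneg_left hkey (le_trans (by norm_num) ht2R)]
  · rw [div_le_div_iff₀ h2t (by norm_num : (0:ℝ) < 3)]
    linarith
end

section
/- Let $0 < b_0 \le b_1 \le \cdots \le b_T$ and $\Delta > 0$, and let $\tau \le T$ satisfy $b_t \le B$ for all $t \le \tau$, where $B \ge b_0$. Then $\sum_{t=1}^{\tau} \frac{b_t^{2+\Delta}-b_{t-1}^{2+\Delta}}{b_t^{3}} \le (2+\Delta) B^{\Delta-1}\log\frac{B}{b_0}$ when $\Delta \ge 1$, and $\sum_{t=1}^{\tau} \frac{b_t^{2+\Delta}-b_{t-1}^{2+\Delta}}{b_t^{3}} \le (2+\Delta) b_0^{\Delta-1}\log\frac{B}{b_0}$ when $0 < \Delta < 1$. -/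
open Finset

lemma tele16 (L : ℕ → ℝ) (n : ℕ) :
    ∑ i ∈ Finset.Icc 1 n, (L i - L (i - 1)) = L n - L 0 := by
  induction n with
  | zero => simp
  | succ n ih =>
    rw [Finset.sum_Icc_succ_top (Nat.le_add_left 1 n), ih]
    simp

lemma aux16 (τ : ℕ) (b : ℕ → ℝ) (Δ B C : ℝ) (hΔ : 0 < Δ)
    (hpos : ∀ t, 0 < b t) (hmono : Monotone b)
    (hB : b 0 ≤ B) (hbB : ∀ t, t ≤ τ → b t ≤ B)
    (hC0 : 0 ≤ C) (hC : ∀ t, t ∈ Finset.Icc 1 τ → b t ^ (Δ - 1) ≤ C) :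
    (∑ t ∈ Finset.Icc 1 τ, (b t ^ (2 + Δ) - b (t - 1) ^ (2 + Δ)) / b t ^ (3 : ℝ))
      ≤ (2 + Δ) * C * Real.log (B / b 0) := by
  have h2Δ : (0:ℝ) < 2 + Δ := by linarith
  have step : ∀ t, t ∈ Finset.Icc 1 τ →
      (b t ^ (2 + Δ) - b (t - 1) ^ (2 + Δ)) / b t ^ (3 : ℝ)
        ≤ (2 + Δ) * C * (Real.log (b t) - Real.log (b (t-1))) := by
    intro t ht
    simp only [mem_Icc] at ht
    set x := b t with hx
    set y := b (t-1) with hy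
    have hx0 : 0 < x := hpos t
    have hy0 : 0 < y := hpos (t-1)
    have hyx : y ≤ x := hmono (Nat.sub_le t 1)
    have key : (x ^ (2 + Δ) - y ^ (2 + Δ)) / x ^ (3:ℝ)
        = x ^ (Δ - 1) * (1 - (y/x) ^ (2 + Δ)) := by
      have e1 : x ^ (2+Δ) / x ^ (3:ℝ) = x ^ (Δ-1) := by
        rw [← Real.rpow_sub hx0]; ring_nf
      have e2 : x ^ (Δ-1) * (y/x) ^ (2+Δ) = y ^ (2+Δ) / x ^ (3:ℝ) := by
        rw [Real.div_rpow hy0.le hx0.le]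
        rw [mul_div_assoc', mul_comm, mul_div_assoc, ← Real.rpow_sub hx0]
        rw [show Δ - 1 - (2+Δ) = -(3:ℝ) by ring, Real.rpow_neg hx0.le,
          div_eq_mul_inv]
      rw [mul_sub, mul_one, e2, ← e1, sub_div]
    rw [key]
    have hlog : 1 - (y/x) ^ (2 + Δ) ≤ (2 + Δ) * (Real.log x - Real.log y) := by
      have hq : (0:ℝ) < (y/x) ^ (2 + Δ) := Real.rpow_pos_of_pos (div_pos hy0 hx0) _
      have := Real.log_le_sub_one_of_pos hq
      rw [Real.log_rpow (div_pos hy0 hx0), Real.log_div hy0.ne' hx0.ne'] at this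
      nlinarith
    have hlogpos : 0 ≤ Real.log x - Real.log y := by
      have := Real.log_le_log hy0 hyx
      linarith
    calc x ^ (Δ - 1) * (1 - (y/x) ^ (2 + Δ))
        ≤ x ^ (Δ - 1) * ((2 + Δ) * (Real.log x - Real.log y)) := by
          apply mul_le_mul_of_nonneg_left hlog (Real.rpow_nonneg hx0.le _)
      _ ≤ C * ((2 + Δ) * (Real.log x - Real.log y)) := by
          apply mul_le_mul_of_nonneg_right (hC t (mem_Icc.2 ht))
          positivity
      _ = (2 + Δ) * C * (Real.log x - Real.log y) := by ring
  calc (∑ t ∈ Finset.Icc 1 τ, (b t ^ (2 + Δ) - b (t - 1) ^ (2 + Δ)) / b t ^ (3 : ℝ))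
      ≤ ∑ t ∈ Finset.Icc 1 τ, (2 + Δ) * C * (Real.log (b t) - Real.log (b (t-1))) :=
        Finset.sum_le_sum step
    _ = (2 + Δ) * C * (Real.log (b τ) - Real.log (b 0)) := by
        rw [← Finset.mul_sum]
        congr 1
        exact tele16 (fun i => Real.log (b i)) τ
    _ ≤ (2 + Δ) * C * Real.log (B / b 0) := by
        rw [Real.log_div (by linarith [hpos 0] : B ≠ 0) (hpos 0).ne']
        apply mul_le_mul_of_nonneg_left _ (by positivity)
        have : b τ ≤ B := hbB τ le_rfl
        have := Real.log_le_log (hpos τ) this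
        linarith

theorem stmt_16 (τ : ℕ) (b : ℕ → ℝ) (Δ B : ℝ) (hΔ : 0 < Δ)
    (hpos : ∀ t, 0 < b t) (hmono : Monotone b)
    (hB : b 0 ≤ B) (hbB : ∀ t, t ≤ τ → b t ≤ B) :
    ((1 : ℝ) ≤ Δ →
      (∑ t ∈ Finset.Icc 1 τ, (b t ^ (2 + Δ) - b (t - 1) ^ (2 + Δ)) / b t ^ (3 : ℝ))
        ≤ (2 + Δ) * B ^ (Δ - 1) * Real.log (B / b 0)) ∧
    (Δ < 1 →
      (∑ t ∈ Finset.Icc 1 τ, (b t ^ (2 + Δ) - b (t - 1) ^ (2 + Δ)) / b t ^ (3 : ℝ))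
        ≤ (2 + Δ) * b 0 ^ (Δ - 1) * Real.log (B / b 0)) := by
  have hB0 : 0 < B := lt_of_lt_of_le (hpos 0) hB
  constructor
  · intro h1
    apply aux16 τ b Δ B _ hΔ hpos hmono hB hbB (by positivity)
    intro t ht
    simp only [mem_Icc] at ht
    exact Real.rpow_le_rpow (hpos t).le (hbB t ht.2) (by linarith)
  · intro h1
    apply aux16 τ b Δ B _ hΔ hpos hmono hB hbB (Real.rpow_nonneg (hpos 0).le _)
    intro t ht
    exact Real.rpow_le_rpow_of_nonpos (hpos 0) (hmono (Nat.zero_le t)) (by linarith)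
end

section
/- Let $X \ge 0$ and suppose $X \le G_0 + G_1 \log(1 + cX)$ for constants $G_0, G_1, c \ge 0$. Then $X \le 2G_0 + 2G_1 + 2G_1\log(1 + 2ecG_1)$. -/
/-!
Bound the logarithm by its tangent line at `D = 1 + 2 c G₁`: then
`G₁ log (1 + c X) ≤ G₁ log D + G₁ c X / D ≤ G₁ log D + X / 2`, and the `X / 2` is absorbed
into the left-hand side, giving `X ≤ 2 G₀ + 2 G₁ log (1 + 2 c G₁)`, which is stronger than
the claimed bound.
-/

open Real

namespace Real

lemma log_le_log_add_sub_div {y D : ℝ} (hy : 0 < y) (hD : 0 < D) :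
    log y ≤ log D + (y - D) / D := by
  have hquot := log_le_sub_one_of_pos (div_pos hy hD)
  rw [log_div hy.ne' hD.ne'] at hquot
  rw [sub_div, div_self hD.ne']
  linarith

end Real

lemma le_two_mul_add_two_mul_log_of_le_add_mul_log {X G₀ G₁ c : ℝ} (hX : 0 ≤ X) (hG₁ : 0 ≤ G₁)
    (hc : 0 ≤ c) (h : X ≤ G₀ + G₁ * log (1 + c * X)) :
    X ≤ 2 * G₀ + 2 * G₁ * log (1 + 2 * c * G₁) := by
  set D := 1 + 2 * c * G₁
  have hcG₁ : 0 ≤ c * G₁ := mul_nonneg hc hG₁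
  have hD : 0 < D := by positivity
  have htangent : log (1 + c * X) ≤ log D + c * X / D := by
    refine (log_le_log_add_sub_div (by positivity) hD).trans ?_
    gcongr
    linarith
  have habsorb : G₁ * (c * X / D) ≤ X / 2 := by
    rw [← mul_div_assoc, div_le_div_iff₀ hD two_pos]
    nlinarith [mul_nonneg hcG₁ hX]
  have hscaled := mul_le_mul_of_nonneg_left htangent hG₁
  rw [mul_add] at hscaled
  linarith

theorem stmt_18_general (X G₀ G₁ c : ℝ) (hX : 0 ≤ X) (hG₁ : 0 ≤ G₁) (hc : 0 ≤ c)
    (h : X ≤ G₀ + G₁ * Real.log (1 + c * X)) :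
    X ≤ 2 * G₀ + 2 * G₁ + 2 * G₁ * Real.log (1 + 2 * Real.exp 1 * c * G₁) := by
  have hcG₁ : 0 ≤ c * G₁ := mul_nonneg hc hG₁
  have hlog : log (1 + 2 * c * G₁) ≤ log (1 + 2 * exp 1 * c * G₁) := by
    gcongr
    nlinarith [add_one_le_exp 1]
  have hsharp := le_two_mul_add_two_mul_log_of_le_add_mul_log hX hG₁ hc h
  have hscaled := mul_le_mul_of_nonneg_left hlog hG₁
  linarith

theorem stmt_18 (X G₀ G₁ c : ℝ) (hX : 0 ≤ X) (hG₀ : 0 ≤ G₀) (hG₁ : 0 ≤ G₁) (hc : 0 ≤ c)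
    (h : X ≤ G₀ + G₁ * Real.log (1 + c * X)) :
    X ≤ 2 * G₀ + 2 * G₁ + 2 * G₁ * Real.log (1 + 2 * Real.exp 1 * c * G₁) :=
  stmt_18_general X G₀ G₁ c hX hG₁ hc h
end

section
/- Let $F:\mathbb{R}^d\to\mathbb{R}$ be convex with minimizer $x^*$ and $L$-smooth, and suppose the (accelerated) iterates satisfy $F(w_{t+1}) - F^* \le a_t q_t b_t D$ for all $t$, where $a_t = \frac{2}{t+1}$, $q_t = \frac{2}{t}$, $D \ge 0$, and $b_t = \sqrt{b_0^2 + \sum_{i=1}^t \|\nabla F(v_i)\|^2/q_i^2}$ with $\|\nabla F(v_t)\|^2 \le 2\|\nabla F(v_t) - \nabla F(w_{t+1})\|^2 + 2\|\nabla F(w_{t+1})\|^2$, $\|\nabla F(v_t)-\nabla F(w_{t+1})\| \le L\|v_t - w_{t+1}\|$, $v_t - w_{t+1} = a_t(x_t - x_{t+1})$, $\|x_{t+1}-x_t\|^2 = \frac{\eta^2(b_t^2 - b_{t-1}^2)}{b_t^2}$, $a_t \le q_t$, and $\|\nabla F(w_{t+1})\|^2 \le 2L(F(w_{t+1}) - F^*)$.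 Then $b_t \le b_0 + \frac{4\eta^2 L^2}{b_0} + 4LDt$ for all $t$. -/
open RealInnerProductSpace Finset

/-! Lipschitz continuity of the gradient, `a_t ≤ q_t` and the rate bound turn the AdaGrad
recursion for `b_t` into `b_t² ≤ b_{t-1}² + 2η²L²(b_t² - b_{t-1}²)/b_t² + 4LD b_t`. Dividing by
`b_t` and using `(b_t² - b_{t-1}²)/b_t³ ≤ 2(1/b_{t-1} - 1/b_t)`, the potential `b + 4η²L²/b` grows
by at most `4LD` per step, so it telescopes. -/

theorem sq_sub_sq_div_pow_three_le {p c : ℝ} (hp : 0 < p) (hpc : p ≤ c) :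
    (c ^ 2 - p ^ 2) / c ^ 3 ≤ 2 * (1 / p - 1 / c) := by
  have hc : 0 < c := hp.trans_le hpc
  have hrhs : 2 * (1 / p - 1 / c) = 2 * c ^ 2 * (c - p) / p / c ^ 3 := by
    field_simp
  rw [hrhs, div_le_div_iff_of_pos_right (by positivity), le_div_iff₀ hp]
  nlinarith [mul_nonneg (sub_nonneg.2 hpc) (mul_nonneg (sub_nonneg.2 hpc) hc.le)]

theorem add_div_le_add_div_add_of_sq_le {p c K M : ℝ} (hp : 0 < p) (hpc : p ≤ c) (hK : 0 ≤ K)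
    (h : c ^ 2 ≤ p ^ 2 + K * (c ^ 2 - p ^ 2) / c ^ 2 + M * c) :
    c + 2 * K / c ≤ p + 2 * K / p + M := by
  have hc : 0 < c := hp.trans_le hpc
  have hdiv : c ≤ p ^ 2 / c + K * ((c ^ 2 - p ^ 2) / c ^ 3) + M := by
    calc c = c ^ 2 / c := by field_simp
      _ ≤ (p ^ 2 + K * (c ^ 2 - p ^ 2) / c ^ 2 + M * c) / c := by gcongr
      _ = _ := by field_simp
  have hsq : p ^ 2 / c ≤ p := by
    rw [div_le_iff₀ hc]; nlinarith
  have hcube := mul_le_mul_of_nonneg_left (sq_sub_sq_div_pow_three_le hp hpc) hK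
  have hK2 : ∀ y : ℝ, 2 * K / y = 2 * K * (1 / y) := fun y => by ring
  rw [hK2, hK2]
  linarith

theorem le_add_mul_of_forall_succ_le {u : ℕ → ℝ} {M : ℝ} (h : ∀ n, u (n + 1) ≤ u n + M) (n : ℕ) :
    u n ≤ u 0 + M * n := by
  induction n with
  | zero => simp
  | succ n ih => push_cast; linarith [h n]

theorem norm_sq_div_sq_le_of_lipschitz {E : Type*} [SeminormedAddCommGroup E] [NormedSpace ℝ E]
    {g : E → E} {L : ℝ} (hg : ∀ u u', ‖g u - g u'‖ ≤ L * ‖u - u'‖) {v w x x' : E} {a q : ℝ}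
    (ha : 0 < a) (haq : a ≤ q) (hvw : v - w = a • (x - x')) :
    ‖g v‖ ^ 2 / q ^ 2 ≤ 2 * L ^ 2 * ‖x' - x‖ ^ 2 + 2 * (‖g w‖ ^ 2 / q ^ 2) := by
  have hq : 0 < q := ha.trans_le haq
  have hgv : ‖g v‖ ≤ L * a * ‖x' - x‖ + ‖g w‖ := by
    have := hg v w
    rw [hvw, norm_smul, Real.norm_of_nonneg ha.le, norm_sub_rev x x'] at this
    linarith [norm_sub_norm_le (g v) (g w)]
  have hgv2 : ‖g v‖ ^ 2 ≤ 2 * ((L * a * ‖x' - x‖) ^ 2 + ‖g w‖ ^ 2) :=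
    (pow_le_pow_left₀ (norm_nonneg _) hgv 2).trans add_sq_le
  have haq2 : (a / q) ^ 2 ≤ 1 := pow_le_one₀ (by positivity) ((div_le_one hq).2 haq)
  calc ‖g v‖ ^ 2 / q ^ 2 ≤ 2 * ((L * a * ‖x' - x‖) ^ 2 + ‖g w‖ ^ 2) / q ^ 2 := by gcongr
    _ = 2 * L ^ 2 * ‖x' - x‖ ^ 2 * (a / q) ^ 2 + 2 * (‖g w‖ ^ 2 / q ^ 2) := by ring
    _ ≤ 2 * L ^ 2 * ‖x' - x‖ ^ 2 * 1 + 2 * (‖g w‖ ^ 2 / q ^ 2) := by gcongr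
    _ = _ := by ring

theorem sq_succ_eq_of_eq_sqrt_sum_Icc {b s : ℕ → ℝ} {b₀ : ℝ} (hs : ∀ i, 0 ≤ s i)
    (hb : ∀ t, b t = √(b₀ ^ 2 + ∑ i ∈ Icc 1 t, s i)) (n : ℕ) :
    b (n + 1) ^ 2 = b n ^ 2 + s (n + 1) := by
  have hsum : ∀ t, 0 ≤ b₀ ^ 2 + ∑ i ∈ Icc 1 t, s i := fun t =>
    add_nonneg (sq_nonneg _) (sum_nonneg fun i _ => hs i)
  rw [hb, hb, Real.sq_sqrt (hsum _), Real.sq_sqrt (hsum _), sum_Icc_succ_top (by omega)]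
  ring

theorem sq_le_sq_add_of_lipschitz_step {E : Type*} [SeminormedAddCommGroup E] [NormedSpace ℝ E]
    {g : E → E} {L η D p c a q : ℝ} {v w x x' : E} (hL : 0 ≤ L) (hD : 0 ≤ D) (hc : 0 ≤ c)
    (hg : ∀ u u', ‖g u - g u'‖ ≤ L * ‖u - u'‖) (ha : 0 < a) (haq : a ≤ q)
    (hrec : c ^ 2 = p ^ 2 + ‖g v‖ ^ 2 / q ^ 2) (hvw : v - w = a • (x - x'))
    (hx : ‖x' - x‖ ^ 2 = η ^ 2 * (c ^ 2 - p ^ 2) / c ^ 2)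
    (hgw : ‖g w‖ ^ 2 ≤ 2 * L * (a * q * c * D)) :
    c ^ 2 ≤ p ^ 2 + 2 * η ^ 2 * L ^ 2 * (c ^ 2 - p ^ 2) / c ^ 2 + 4 * L * D * c := by
  have hq : 0 < q := ha.trans_le haq
  have hw : ‖g w‖ ^ 2 / q ^ 2 ≤ 2 * L * D * c := by
    rw [div_le_iff₀ (by positivity)]
    have hLDcq : 0 ≤ 2 * L * D * c * q := by positivity
    linarith [mul_le_mul_of_nonneg_left haq hLDcq]
  have hv := norm_sq_div_sq_le_of_lipschitz hg ha haq hvw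
  rw [hx] at hv
  linear_combination hrec + hv + 2 * hw

theorem stmt_19_general {d : ℕ} (F : EuclideanSpace ℝ (Fin d) → ℝ)
    (xstar : EuclideanSpace ℝ (Fin d)) (L η D b₀ : ℝ)
    (hL : 0 < L) (hD : 0 ≤ D) (hb₀ : 0 < b₀)
    (hLip : ∀ u u', ‖gradient F u - gradient F u'‖ ≤ L * ‖u - u'‖)
    (v w x : ℕ → EuclideanSpace ℝ (Fin d)) (a q b : ℕ → ℝ)
    (ha : ∀ t, a t = 2 / ((t : ℝ) + 1))
    (hq : ∀ t, 1 ≤ t → q t = 2 / (t : ℝ))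
    (hb : ∀ t, b t = Real.sqrt (b₀ ^ 2 +
      ∑ i ∈ Finset.Icc 1 t, ‖gradient F (v i)‖ ^ 2 / (q i) ^ 2))
    (hrate : ∀ t, 1 ≤ t → F (w (t + 1)) - F xstar ≤ a t * q t * b t * D)
    (hvw : ∀ t, 1 ≤ t → v t - w (t + 1) = a t • (x t - x (t + 1)))
    (hstep : ∀ t, 1 ≤ t →
      ‖x (t + 1) - x t‖ ^ 2 = η ^ 2 * ((b t) ^ 2 - (b (t - 1)) ^ 2) / (b t) ^ 2)
    (hgw : ∀ t, 1 ≤ t →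
      ‖gradient F (w (t + 1))‖ ^ 2 ≤ 2 * L * (F (w (t + 1)) - F xstar)) :
    ∀ t, 1 ≤ t → b t ≤ b₀ + 4 * η ^ 2 * L ^ 2 / b₀ + 4 * L * D * t := by
  set g := gradient F
  have hs : ∀ i, 0 ≤ ‖g (v i)‖ ^ 2 / q i ^ 2 := fun i => by positivity
  have hbpos : ∀ t, 0 < b t := fun t => by rw [hb]; positivity
  have hrec := sq_succ_eq_of_eq_sqrt_sum_Icc hs hb
  have hmono : ∀ n, b n ≤ b (n + 1) := fun n =>
    (pow_le_pow_iff_left₀ (hbpos n).le (hbpos _).le two_ne_zero).1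
      (by linarith [hrec n, hs (n + 1)])
  have haq : ∀ n : ℕ, 0 < a (n + 1) ∧ a (n + 1) ≤ q (n + 1) := fun n => by
    rw [ha, hq _ (by omega)]
    push_cast
    exact ⟨by positivity, by gcongr; linarith⟩
  have hpot : ∀ n, b (n + 1) + 2 * (2 * η ^ 2 * L ^ 2) / b (n + 1) ≤
      b n + 2 * (2 * η ^ 2 * L ^ 2) / b n + 4 * L * D := fun n => by
    have hx := hstep (n + 1) (by omega)
    simp only [Nat.add_sub_cancel] at hx
    refine add_div_le_add_div_add_of_sq_le (hbpos n) (hmono n) (by positivity) ?_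
    exact sq_le_sq_add_of_lipschitz_step hL.le hD (hbpos _).le hLip (haq n).1 (haq n).2 (hrec n)
      (hvw (n + 1) (by omega)) hx
      ((hgw _ (by omega)).trans (by gcongr; exact hrate _ (by omega)))
  intro t _
  have hb0 : b 0 = b₀ := by simp [hb 0, Real.sqrt_sq hb₀.le]
  have hbound := le_add_mul_of_forall_succ_le
    (u := fun n => b n + 2 * (2 * η ^ 2 * L ^ 2) / b n) hpot t
  have hpen : 0 ≤ 2 * (2 * η ^ 2 * L ^ 2) / b t := by have := hbpos t; positivity
  simp only [hb0] at hbound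
  linear_combination hbound + hpen

theorem stmt_19 {d : ℕ} (F : EuclideanSpace ℝ (Fin d) → ℝ)
    (xstar : EuclideanSpace ℝ (Fin d)) (L η D b₀ : ℝ)
    (hL : 0 < L) (hη : 0 < η) (hD : 0 ≤ D) (hb₀ : 0 < b₀)
    (hdiff : Differentiable ℝ F)
    (hconv : ConvexOn ℝ Set.univ F)
    (hmin : ∀ y, F xstar ≤ F y)
    (hLip : ∀ u u', ‖gradient F u - gradient F u'‖ ≤ L * ‖u - u'‖)
    (v w x : ℕ → EuclideanSpace ℝ (Fin d)) (a q b : ℕ → ℝ)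
    (ha : ∀ t, a t = 2 / ((t : ℝ) + 1))
    (hq : ∀ t, 1 ≤ t → q t = 2 / (t : ℝ))
    (hb : ∀ t, b t = Real.sqrt (b₀ ^ 2 +
      ∑ i ∈ Finset.Icc 1 t, ‖gradient F (v i)‖ ^ 2 / (q i) ^ 2))
    (hrate : ∀ t, 1 ≤ t → F (w (t + 1)) - F xstar ≤ a t * q t * b t * D)
    (hvw : ∀ t, 1 ≤ t → v t - w (t + 1) = a t • (x t - x (t + 1)))
    (hstep : ∀ t, 1 ≤ t →
      ‖x (t + 1) - x t‖ ^ 2 = η ^ 2 * ((b t) ^ 2 - (b (t - 1)) ^ 2) / (b t) ^ 2)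
    (hgw : ∀ t, 1 ≤ t →
      ‖gradient F (w (t + 1))‖ ^ 2 ≤ 2 * L * (F (w (t + 1)) - F xstar)) :
    ∀ t, 1 ≤ t → b t ≤ b₀ + 4 * η ^ 2 * L ^ 2 / b₀ + 4 * L * D * t :=
  stmt_19_general F xstar L η D b₀ hL hD hb₀ hLip v w x a q b ha hq hb hrate hvw hstep hgw
end
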